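/- arXiv:2602.13645 — 4 statements merged into one kernel-verified Lean document; each statement's English description precedes it below -/
import Mathlib

section
/- The principal's optimal payoff satisfies V̄ = max_{u ∈ [0,1]} Σ_{θ∈Θ} ρ(θ)·γ_θ^co(u), where γ_θ^co is the concave envelope of the mutual payoff function γ_θ. -/
open MeasureTheory Set Filter

noncomputable section

namespace CheapTalk

/-- The economic environment: finite state space `Θ`, full-support prior `ρ`,
continuous strictly monotone state-independent agent utility `uA` normalized on `[0,1]`,
continuous principal utility `uP` with values in `[0,1]`, and actions `0` and `1`
optimal for the principal in some states. -/
structure Env (Θ : Type*) [Fintype Θ] where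
  ρ : Θ → ℝ
  ρ_pos : ∀ θ, 0 < ρ θ
  ρ_sum : ∑ θ, ρ θ = 1
  uA : ℝ → ℝ
  uA_cont : Continuous uA
  uA_mono : StrictMonoOn uA (Icc 0 1)
  uA_zero : uA 0 = 0
  uA_one : uA 1 = 1
  uA_mem : ∀ a ∈ Icc (0:ℝ) 1, uA a ∈ Icc (0:ℝ) 1
  uP : ℝ → Θ → ℝ
  uP_cont : ∀ θ, Continuous fun a => uP a θ
  uP_mem : ∀ a ∈ Icc (0:ℝ) 1, ∀ θ, uP a θ ∈ Icc (0:ℝ) 1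
  opt_zero : ∃ θ, ∀ a ∈ Icc (0:ℝ) 1, uP a θ ≤ uP 0 θ
  opt_one : ∃ θ, ∀ a ∈ Icc (0:ℝ) 1, uP a θ ≤ uP 1 θ

variable {Θ M : Type*} [Fintype Θ] [Fintype M]

/-- A mixed messaging strategy of the agent. -/
def IsStrategy (σ : Θ → M → ℝ) : Prop :=
  (∀ θ m, 0 ≤ σ θ m) ∧ ∀ θ, ∑ m, σ θ m = 1

/-- Ex-ante probability of message `m` under strategy `σ`. -/
def msgProb (E : Env Θ) (σ : Θ → M → ℝ) (m : M) : ℝ := ∑ θ, E.ρ θ * σ θ m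

/-- A message is on path if it has positive ex-ante probability. -/
def OnPath (E : Env Θ) (σ : Θ → M → ℝ) (m : M) : Prop := 0 < msgProb E σ m

/-- Bayesian posterior belief after message `m`. -/
def posterior (E : Env Θ) (σ : Θ → M → ℝ) (m : M) (θ : Θ) : ℝ :=
  E.ρ θ * σ θ m / msgProb E σ m

/-- The principal's expected utility from action `a` under belief `μ`. -/
def pUtil (E : Env Θ) (μ : Θ → ℝ) (a : ℝ) : ℝ := ∑ θ, μ θ * E.uP a θ

/-- The set of the principal's best-response actions to belief `μ`. -/
def BRset (E : Env Θ) (μ : Θ → ℝ) : Set ℝ :=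
  {a | a ∈ Icc (0:ℝ) 1 ∧ ∀ b ∈ Icc (0:ℝ) 1, pUtil E μ b ≤ pUtil E μ a}

/-- A mechanism: a committed action plan (a lottery over actions in `[0,1]` for
each message) and a credibility level `χ ∈ [0,1]`. -/
structure Mech (M : Type*) where
  π : M → Measure ℝ
  π_prob : ∀ m, IsProbabilityMeasure (π m)
  π_supp : ∀ m, π m (Icc 0 1) = 1
  χ : ℝ
  χ_nonneg : 0 ≤ χ
  χ_le_one : χ ≤ 1

/-- The agent's expected payoff from the (uncommitted) principal's response to `m`. -/
def uAOf (E : Env Θ) (σP : M → Measure ℝ) (m : M) : ℝ := ∫ a, E.uA a ∂(σP m)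

/-- `σP` is a best-response strategy of the uncommitted principal to `σ`:
probability measures on `[0,1]`, supported on the best-response set at every
on-path message, and pessimistic (agent payoff `0`) at off-path messages. -/
def IsBR (E : Env Θ) (σ : Θ → M → ℝ) (σP : M → Measure ℝ) : Prop :=
  (∀ m, IsProbabilityMeasure (σP m) ∧ σP m (Icc 0 1) = 1) ∧
  (∀ m, OnPath E σ m → σP m (BRset E (posterior E σ m)) = 1) ∧
  (∀ m, ¬ OnPath E σ m → uAOf E σP m = 0)

/-- The agent's expected payoff from sending message `m` under mechanism `Q`
when the uncommitted principal plays `σP`. -/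
def UA (E : Env Θ) (Q : Mech M) (σP : M → Measure ℝ) (m : M) : ℝ :=
  Q.χ * ∫ a, E.uA a ∂(Q.π m) + (1 - Q.χ) * uAOf E σP m

/-- An equilibrium of the game induced by mechanism `Q`: agent-optimality (AO),
principal-optimality (PO) with pessimistic off-path beliefs, and no perfect
pooling (NPP). -/
structure Eqm (E : Env Θ) (Q : Mech M) where
  σA : Θ → M → ℝ
  σP : M → Measure ℝ
  strat : IsStrategy σA
  br : IsBR E σA σP
  ao : ∀ θ m, 0 < σA θ m → ∀ m', UA E Q σP m' ≤ UA E Q σP m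
  npp : ∀ m, msgProb E σA m < 1

/-- The principal's expected payoff in equilibrium `e` of mechanism `Q`. -/
def V (E : Env Θ) (Q : Mech M) (e : Eqm E Q) : ℝ :=
  Q.χ * ∑ θ, ∑ m, E.ρ θ * e.σA θ m * ∫ a, E.uP a θ ∂(Q.π m) +
    (1 - Q.χ) * ∑ θ, ∑ m, E.ρ θ * e.σA θ m * ∫ a, E.uP a θ ∂(e.σP m)

/-- The principal's no-communication payoff. -/
def VB (E : Env Θ) : ℝ := sSup {v | ∃ a ∈ Icc (0:ℝ) 1, v = pUtil E E.ρ a}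

/-- The set of the principal's equilibrium payoffs under `Q`. -/
def eqPayoffs (E : Env Θ) (Q : Mech M) : Set ℝ := {v | ∃ e : Eqm E Q, v = V E Q e}

-- The principal's worst-case (lowest) equilibrium payoff under `Q`;
-- by convention `VB E` if `Q` admits no equilibrium.
open Classical in
def worstCase (E : Env Θ) (Q : Mech M) : ℝ :=
  if (eqPayoffs E Q).Nonempty then sInf (eqPayoffs E Q) else VB E

-- The principal's best equilibrium payoff under `Q`;
-- by convention `VB E` if `Q` admits no equilibrium.
open Classical in
def bestCase (E : Env Θ) (Q : Mech M) : ℝ :=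
  if (eqPayoffs E Q).Nonempty then sSup (eqPayoffs E Q) else VB E

/-- The optimal payoff `V̄`: supremum over mechanisms and their equilibria. -/
def Vbar (E : Env Θ) (M' : Type*) [Fintype M'] : ℝ :=
  sSup {v | ∃ Q : Mech M', v ∈ eqPayoffs E Q}

/-- The cheap-talk payoff: the principal's highest equilibrium payoff with `χ = 0`. -/
def VCT (E : Env Θ) (M' : Type*) [Fintype M'] : ℝ :=
  sSup {v | ∃ Q : Mech M', Q.χ = 0 ∧ v ∈ eqPayoffs E Q}

/-- `σ` is a messaging strategy of some equilibrium of `Q` (i.e. `σ ∈ Σ(Q)`). -/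
def Feasible (E : Env Θ) (Q : Mech M) (σ : Θ → M → ℝ) : Prop := ∃ e : Eqm E Q, e.σA = σ

/-- A payoff is worst-case implementable: it is the worst-case payoff of some
mechanism with `χ < 1`, or a limit of such along `χₙ → 1` (virtual implementation). -/
def WCImplementable (E : Env Θ) (M' : Type*) [Fintype M'] (v : ℝ) : Prop :=
  (∃ Q : Mech M', Q.χ < 1 ∧ v = worstCase E Q) ∨
  (∃ Qs : ℕ → Mech M',
    (∀ n, (Qs n).χ < 1) ∧
    Tendsto (fun n => (Qs n).χ) atTop (nhds 1) ∧
    Tendsto (fun n => worstCase E (Qs n)) atTop (nhds v))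

/-- The worst-case optimal payoff `V⋆`. -/
def Vstar (E : Env Θ) (M' : Type*) [Fintype M'] : ℝ :=
  sSup {v | WCImplementable E M' v}

/-- A two-message strategy: exactly two on-path messages. -/
def TwoMessage (E : Env Θ) (σ : Θ → M → ℝ) : Prop :=
  IsStrategy σ ∧ ∃ m₁ m₂ : M, m₁ ≠ m₂ ∧ OnPath E σ m₁ ∧ OnPath E σ m₂ ∧
    ∀ m, OnPath E σ m → m = m₁ ∨ m = m₂

/-- `Δ(σ)`: the largest agent-payoff spread across the two on-path messages
that `σ` can induce from a best-responding uncommitted principal. -/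
def spread (E : Env Θ) (σ : Θ → M → ℝ) : ℝ :=
  sSup {d | ∃ (σP : M → Measure ℝ) (m₁ m₂ : M), IsBR E σ σP ∧ m₁ ≠ m₂ ∧
    OnPath E σ m₁ ∧ OnPath E σ m₂ ∧ d = |uAOf E σP m₁ - uAOf E σP m₂|}

/-- A polarizing strategy: a two-message strategy maximizing the spread `Δ(σ)`
(i.e. an element of `Σ⋆`). -/
def Polarizing (E : Env Θ) (σ : Θ → M → ℝ) : Prop :=
  TwoMessage E σ ∧ ∀ σ' : Θ → M → ℝ, TwoMessage E σ' → spread E σ' ≤ spread E σ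

/-- `Δ̄`: the maximal spread over two-message strategies. -/
def Δbar (E : Env Θ) (M' : Type*) [Fintype M'] : ℝ :=
  sSup {d | ∃ σ : Θ → M' → ℝ, TwoMessage E σ ∧ d = spread E σ}

/-- A polarizing mechanism: partial commitment and some polarizing strategy is feasible. -/
def PolarizingMech (E : Env Θ) (Q : Mech M) : Prop :=
  Q.χ < 1 ∧ ∃ σ : Θ → M → ℝ, Polarizing E σ ∧ Feasible E Q σ

/-- Agent payoffs achievable by principal best responses to belief `μ` (the set `u(μ)`). -/
def uSet (E : Env Θ) (μ : Θ → ℝ) : Set ℝ :=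
  {u | ∃ ν : Measure ℝ, IsProbabilityMeasure ν ∧ ν (BRset E μ) = 1 ∧ u = ∫ a, E.uA a ∂ν}

/-- The set `U` of pairs of agent payoffs arising from principal best responses to
the two messages of some Bayes-plausible two-message strategy. -/
def payoffPairs (E : Env Θ) (M' : Type*) [Fintype M'] : Set (ℝ × ℝ) :=
  {p | ∃ (σ : Θ → M' → ℝ) (σP : M' → Measure ℝ) (m₁ m₂ : M'),
    TwoMessage E σ ∧ IsBR E σ σP ∧ m₁ ≠ m₂ ∧ OnPath E σ m₁ ∧ OnPath E σ m₂ ∧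
    p = (uAOf E σP m₁, uAOf E σP m₂)}

/-- Genericity 2: the set `U` has a unique polarizing point (up to relabeling). -/
def Genericity2 (E : Env Θ) (M' : Type*) [Fintype M'] : Prop :=
  ∃! p : ℝ × ℝ, p ∈ payoffPairs E M' ∧ p.1 ≤ p.2 ∧
    ∀ q ∈ payoffPairs E M', |q.1 - q.2| ≤ |p.1 - p.2|

/-- Degenerate belief on state `θ`. -/
def diracBelief (θ : Θ) : Θ → ℝ := ({θ} : Set Θ).indicator fun _ => 1

/-- Genericity 1: at most two best responses at every belief, a unique best
response at Lebesgue-almost-every belief, and a unique optimum in each state. -/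
def Genericity1 (E : Env Θ) : Prop :=
  (∀ μ ∈ stdSimplex ℝ Θ, ∃ a b : ℝ, ∀ c ∈ BRset E μ, c = a ∨ c = b) ∧
  (∃ N : Set (Θ → ℝ), (volume : Measure (Θ → ℝ)) N = 0 ∧
    ∀ μ ∈ stdSimplex ℝ Θ, μ ∉ N → ∃! a, a ∈ BRset E μ) ∧
  (∀ θ : Θ, ∃! a, a ∈ BRset E (diracBelief θ))

/-- No profitable cheap talk: in any equilibrium of the game with `χ = 0`, the
agent's payoff does not exceed his payoff under no communication. -/
def NoCheapTalk (E : Env Θ) (M' : Type*) [Fintype M'] : Prop :=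
  ∀ Q : Mech M', Q.χ = 0 → ∀ e : Eqm E Q, ∀ m, OnPath E e.σA m →
    uAOf E e.σP m ≤ sSup (uSet E E.ρ)

/-- The concave envelope on `[0,1]`: the pointwise smallest concave function
dominating `γ` on `[0,1]`. -/
def concEnv (γ : ℝ → ℝ) (u : ℝ) : ℝ :=
  sInf {v | ∃ g : ℝ → ℝ, ConcaveOn ℝ (Icc (0:ℝ) 1) g ∧
    (∀ x ∈ Icc (0:ℝ) 1, γ x ≤ g x) ∧ v = g u}

/-- The mutual payoff function `γ_θ(u) = u_P(u_A⁻¹(u), θ)`. -/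
def γθ (E : Env Θ) (θ : Θ) (u : ℝ) : ℝ := E.uP (Function.invFunOn E.uA (Icc 0 1) u) θ

/-- The principal's committed payoff from full-commitment plan `π` under strategy `σ`. -/
def VfcPlan (E : Env Θ) (π : M → Measure ℝ) (σ : Θ → M → ℝ) : ℝ :=
  ∑ θ, ∑ m, E.ρ θ * σ θ m * ∫ a, E.uP a θ ∂(π m)

/-- The set `w(Q)` of equilibrium outcome pairs (agent payoff, principal payoff). -/
def outcomes (E : Env Θ) (Q : Mech M) : Set (ℝ × ℝ) :=
  {p | ∃ e : Eqm E Q, p.2 = V E Q e ∧ ∀ m, OnPath E e.σA m → p.1 = UA E Q e.σP m}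

/-- The set `w_fc(π, Σ)` of outcome pairs of full-commitment plan `π` under
strategies restricted to `S`. -/
def outcomesFC (E : Env Θ) (π : M → Measure ℝ) (S : Set (Θ → M → ℝ)) : Set (ℝ × ℝ) :=
  {p | ∃ σ ∈ S, p.2 = VfcPlan E π σ ∧ ∀ m, OnPath E σ m → p.1 = ∫ a, E.uA a ∂(π m)}


/-! ### Auxiliary material for the proof -/

section AuxInv

variable {Θ : Type*} [Fintype Θ]

lemma exists_uA_eq (E : Env Θ) {v : ℝ} (hv : v ∈ Icc (0:ℝ) 1) :
    ∃ a ∈ Icc (0:ℝ) 1, E.uA a = v := by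
  have h := intermediate_value_Icc (by norm_num : (0:ℝ) ≤ 1) E.uA_cont.continuousOn
  rw [E.uA_zero, E.uA_one] at h
  obtain ⟨a, ha, hav⟩ := h hv
  exact ⟨a, ha, hav⟩

/-- Shorthand for the inverse of `uA` on `[0,1]`. -/
def aInv (E : Env Θ) (v : ℝ) : ℝ := Function.invFunOn E.uA (Icc 0 1) v

lemma aInv_mem (E : Env Θ) {v : ℝ} (hv : v ∈ Icc (0:ℝ) 1) : aInv E v ∈ Icc (0:ℝ) 1 :=
  Function.invFunOn_mem (exists_uA_eq E hv)

lemma uA_aInv (E : Env Θ) {v : ℝ} (hv : v ∈ Icc (0:ℝ) 1) : E.uA (aInv E v) = v :=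
  Function.invFunOn_eq (exists_uA_eq E hv)

lemma aInv_uA (E : Env Θ) {a : ℝ} (ha : a ∈ Icc (0:ℝ) 1) : aInv E (E.uA a) = a := by
  have hmem : E.uA a ∈ Icc (0:ℝ) 1 := E.uA_mem a ha
  exact E.uA_mono.injOn (aInv_mem E hmem) ha (uA_aInv E hmem)

lemma gamma_mem (E : Env Θ) (θ : Θ) {x : ℝ} (hx : x ∈ Icc (0:ℝ) 1) :
    γθ E θ x ∈ Icc (0:ℝ) 1 :=
  E.uP_mem _ (aInv_mem E hx) θ

lemma gamma_nonneg (E : Env Θ) (θ : Θ) : ∀ x ∈ Icc (0:ℝ) 1, 0 ≤ γθ E θ x :=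
  fun x hx => (gamma_mem E θ hx).1

lemma gamma_le_one (E : Env Θ) (θ : Θ) : ∀ x ∈ Icc (0:ℝ) 1, γθ E θ x ≤ 1 :=
  fun x hx => (gamma_mem E θ hx).2

lemma gamma_uA (E : Env Θ) (θ : Θ) {a : ℝ} (ha : a ∈ Icc (0:ℝ) 1) :
    γθ E θ (E.uA a) = E.uP a θ := by
  unfold γθ
  rw [show Function.invFunOn E.uA (Icc 0 1) (E.uA a) = a from aInv_uA E ha]

/-- Modulus of continuity of `γθ` at `0`. -/
lemma gamma_cont_zero (E : Env Θ) (θ : Θ) {ε : ℝ} (hε : 0 < ε) :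
    ∃ c, 0 < c ∧ ∀ x ∈ Icc (0:ℝ) 1, x ≤ c → |γθ E θ x - γθ E θ 0| ≤ ε := by
  obtain ⟨δ, hδ, hδε⟩ := Metric.continuous_iff.mp (E.uP_cont θ) 0 ε hε
  set d : ℝ := min (δ / 2) 1 with hd
  have hd0 : 0 < d := lt_min (by linarith) one_pos
  have hdmem : d ∈ Icc (0:ℝ) 1 := ⟨hd0.le, min_le_right _ _⟩
  have h0mem : (0:ℝ) ∈ Icc (0:ℝ) 1 := ⟨le_refl _, zero_le_one⟩
  refine ⟨E.uA d, ?_, ?_⟩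
  · have := E.uA_mono h0mem hdmem hd0
    rwa [E.uA_zero] at this
  · intro x hx hxc
    have hax : aInv E x ∈ Icc (0:ℝ) 1 := aInv_mem E hx
    have haxd : aInv E x ≤ d := by
      by_contra hcon
      push_neg at hcon
      have := E.uA_mono hdmem hax hcon
      rw [uA_aInv E hx] at this
      linarith
    have hdist : dist (aInv E x) 0 < δ := by
      rw [Real.dist_eq, sub_zero, abs_of_nonneg hax.1]
      calc aInv E x ≤ d := haxd
        _ ≤ δ / 2 := min_le_left _ _
        _ < δ := by linarith
    have hval := hδε _ hdist
    have hγ0 : γθ E θ 0 = E.uP 0 θ := by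
      have h00 : (0:ℝ) = E.uA 0 := E.uA_zero.symm
      nth_rewrite 1 [h00]
      exact gamma_uA E θ h0mem
    have hγx : γθ E θ x = E.uP (aInv E x) θ := rfl
    rw [hγx, hγ0, ← Real.dist_eq]
    exact hval.le

/-- Modulus of continuity of `γθ` at `1`. -/
lemma gamma_cont_one (E : Env Θ) (θ : Θ) {ε : ℝ} (hε : 0 < ε) :
    ∃ c, c < 1 ∧ ∀ x ∈ Icc (0:ℝ) 1, c ≤ x → |γθ E θ x - γθ E θ 1| ≤ ε := by
  obtain ⟨δ, hδ, hδε⟩ := Metric.continuous_iff.mp (E.uP_cont θ) 1 ε hε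
  set d : ℝ := max (1 - δ / 2) 0 with hd
  have hd1 : d < 1 := by
    rw [hd]
    rcases le_or_gt (1 - δ / 2) 0 with h | h
    · rw [max_eq_right h]; norm_num
    · rw [max_eq_left h.le]; linarith
  have hdmem : d ∈ Icc (0:ℝ) 1 := ⟨le_max_right _ _, hd1.le⟩
  have h1mem : (1:ℝ) ∈ Icc (0:ℝ) 1 := ⟨zero_le_one, le_refl _⟩
  refine ⟨E.uA d, ?_, ?_⟩
  · have := E.uA_mono hdmem h1mem hd1
    rwa [E.uA_one] at this
  · intro x hx hxc
    have hax : aInv E x ∈ Icc (0:ℝ) 1 := aInv_mem E hx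
    have haxd : d ≤ aInv E x := by
      by_contra hcon
      push_neg at hcon
      have := E.uA_mono hax hdmem hcon
      rw [uA_aInv E hx] at this
      linarith
    have hdist : dist (aInv E x) 1 < δ := by
      rw [Real.dist_eq, abs_of_nonpos (by linarith [hax.2])]
      have : 1 - δ / 2 ≤ d := le_max_left _ _
      linarith
    have hval := hδε _ hdist
    have hγ1 : γθ E θ 1 = E.uP 1 θ := by
      have h11 : (1:ℝ) = E.uA 1 := E.uA_one.symm
      nth_rewrite 1 [h11]
      exact gamma_uA E θ h1mem
    have hγx : γθ E θ x = E.uP (aInv E x) θ := rfl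
    rw [hγx, hγ1, ← Real.dist_eq]
    exact hval.le

end AuxInv

/-! ### Concave envelope -/

section AuxEnv

variable {γ : ℝ → ℝ}

/-- The set whose infimum defines `concEnv`. -/
def majVals (γ : ℝ → ℝ) (u : ℝ) : Set ℝ :=
  {v | ∃ g : ℝ → ℝ, ConcaveOn ℝ (Icc (0:ℝ) 1) g ∧
    (∀ x ∈ Icc (0:ℝ) 1, γ x ≤ g x) ∧ v = g u}

lemma concEnv_eq_sInf (γ : ℝ → ℝ) (u : ℝ) : concEnv γ u = sInf (majVals γ u) := rfl

lemma majVals_one_mem (hγ1 : ∀ x ∈ Icc (0:ℝ) 1, γ x ≤ 1) (u : ℝ) :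
    (1:ℝ) ∈ majVals γ u :=
  ⟨fun _ => 1, concaveOn_const 1 (convex_Icc 0 1), fun x hx => hγ1 x hx, rfl⟩

lemma majVals_lb {u : ℝ} (hu : u ∈ Icc (0:ℝ) 1) : ∀ v ∈ majVals γ u, γ u ≤ v := by
  rintro v ⟨g, _, hmaj, rfl⟩
  exact hmaj u hu

lemma concEnv_le_maj {u : ℝ} (hu : u ∈ Icc (0:ℝ) 1) {g : ℝ → ℝ}
    (hg : ConcaveOn ℝ (Icc (0:ℝ) 1) g) (hmaj : ∀ x ∈ Icc (0:ℝ) 1, γ x ≤ g x) :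
    concEnv γ u ≤ g u :=
  csInf_le ⟨γ u, fun v hv => majVals_lb hu v hv⟩ ⟨g, hg, hmaj, rfl⟩

lemma le_concEnv (hγ1 : ∀ x ∈ Icc (0:ℝ) 1, γ x ≤ 1) {u : ℝ} (hu : u ∈ Icc (0:ℝ) 1) :
    γ u ≤ concEnv γ u :=
  le_csInf ⟨1, majVals_one_mem hγ1 u⟩ (majVals_lb hu)

lemma concEnv_le_one (hγ1 : ∀ x ∈ Icc (0:ℝ) 1, γ x ≤ 1) {u : ℝ} (hu : u ∈ Icc (0:ℝ) 1) :
    concEnv γ u ≤ 1 := by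
  have := concEnv_le_maj hu (concaveOn_const 1 (convex_Icc 0 1))
    (fun x hx => hγ1 x hx)
  simpa using this

lemma concEnv_nonneg (hγ0 : ∀ x ∈ Icc (0:ℝ) 1, 0 ≤ γ x)
    (hγ1 : ∀ x ∈ Icc (0:ℝ) 1, γ x ≤ 1) {u : ℝ} (hu : u ∈ Icc (0:ℝ) 1) :
    0 ≤ concEnv γ u :=
  (hγ0 u hu).trans (le_concEnv hγ1 hu)

lemma concEnv_concave (hγ1 : ∀ x ∈ Icc (0:ℝ) 1, γ x ≤ 1) :
    ConcaveOn ℝ (Icc (0:ℝ) 1) (concEnv γ) := by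
  refine ⟨convex_Icc 0 1, ?_⟩
  intro x hx y hy a b ha hb hab
  simp only [smul_eq_mul]
  refine le_csInf ⟨1, majVals_one_mem hγ1 _⟩ ?_
  rintro v ⟨g, hg, hmaj, rfl⟩
  have h1 : concEnv γ x ≤ g x := concEnv_le_maj hx hg hmaj
  have h2 : concEnv γ y ≤ g y := concEnv_le_maj hy hg hmaj
  have h3 := hg.2 hx hy ha hb hab
  simp only [smul_eq_mul] at h3
  calc a * concEnv γ x + b * concEnv γ y ≤ a * g x + b * g y :=
        add_le_add (mul_le_mul_of_nonneg_left h1 ha) (mul_le_mul_of_nonneg_left h2 hb)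
    _ ≤ g (a * x + b * y) := h3

/-- Values of finite convex combinations of `γ` with barycenter `u`. -/
def comboVals (γ : ℝ → ℝ) (u : ℝ) : Set ℝ :=
  {v | ∃ (n : ℕ) (p x : Fin n → ℝ), (∀ i, 0 ≤ p i) ∧ (∑ i, p i) = 1 ∧
    (∀ i, x i ∈ Icc (0:ℝ) 1) ∧ (∑ i, p i * x i) = u ∧ v = ∑ i, p i * γ (x i)}

lemma comboVals_nonempty {u : ℝ} (hu : u ∈ Icc (0:ℝ) 1) : (comboVals γ u).Nonempty := by
  refine ⟨γ u, 1, (fun _ => 1), (fun _ => u), fun _ => zero_le_one, ?_, fun _ => hu, ?_, ?_⟩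
    <;> simp

lemma comboVals_bddAbove (hγ1 : ∀ x ∈ Icc (0:ℝ) 1, γ x ≤ 1) (u : ℝ) :
    BddAbove (comboVals γ u) := by
  refine ⟨1, ?_⟩
  rintro v ⟨n, p, x, hp, hs, hx, _, rfl⟩
  calc ∑ i, p i * γ (x i) ≤ ∑ i, p i * 1 :=
        Finset.sum_le_sum fun i _ => mul_le_mul_of_nonneg_left (hγ1 _ (hx i)) (hp i)
    _ = 1 := by simp [hs]

lemma comboVals_add {x y a b vx vy : ℝ} (ha : 0 ≤ a) (hb : 0 ≤ b) (hab : a + b = 1)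
    (hvx : vx ∈ comboVals γ x) (hvy : vy ∈ comboVals γ y) :
    a * vx + b * vy ∈ comboVals γ (a * x + b * y) := by
  obtain ⟨n1, p1, x1, hp1, hs1, hx1, hm1, rfl⟩ := hvx
  obtain ⟨n2, p2, x2, hp2, hs2, hx2, hm2, rfl⟩ := hvy
  refine ⟨n1 + n2, Fin.append (fun i => a * p1 i) (fun i => b * p2 i),
    Fin.append x1 x2, ?_, ?_, ?_, ?_, ?_⟩
  · intro i
    refine Fin.addCases (fun j => ?_) (fun j => ?_) i
    · rw [Fin.append_left]; exact mul_nonneg ha (hp1 j)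
    · rw [Fin.append_right]; exact mul_nonneg hb (hp2 j)
  · rw [Fin.sum_univ_add]
    simp only [Fin.append_left, Fin.append_right]
    rw [← Finset.mul_sum, ← Finset.mul_sum, hs1, hs2, mul_one, mul_one, hab]
  · intro i
    refine Fin.addCases (fun j => ?_) (fun j => ?_) i
    · rw [Fin.append_left]; exact hx1 j
    · rw [Fin.append_right]; exact hx2 j
  · rw [Fin.sum_univ_add]
    simp only [Fin.append_left, Fin.append_right, mul_assoc]
    rw [← Finset.mul_sum, ← Finset.mul_sum, hm1, hm2]
  · rw [Fin.sum_univ_add]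
    simp only [Fin.append_left, Fin.append_right, mul_assoc]
    rw [← Finset.mul_sum, ← Finset.mul_sum]

/-- The finite-combination upper envelope. -/
def Hfin (γ : ℝ → ℝ) (u : ℝ) : ℝ := sSup (comboVals γ u)

lemma le_Hfin' (hγ1 : ∀ x ∈ Icc (0:ℝ) 1, γ x ≤ 1) {u : ℝ} (hu : u ∈ Icc (0:ℝ) 1) :
    γ u ≤ Hfin γ u := by
  apply le_csSup (comboVals_bddAbove hγ1 u)
  exact ⟨1, (fun _ => 1), (fun _ => u), fun _ => zero_le_one, by simp, fun _ => hu,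
    by simp, by simp⟩

lemma Hfin_concave (hγ1 : ∀ x ∈ Icc (0:ℝ) 1, γ x ≤ 1) :
    ConcaveOn ℝ (Icc (0:ℝ) 1) (Hfin γ) := by
  refine ⟨convex_Icc 0 1, ?_⟩
  intro x hx y hy a b ha hb hab
  simp only [smul_eq_mul]
  apply _root_.le_of_forall_pos_le_add
  intro ε hε
  obtain ⟨vx, hvxmem, hvx⟩ := exists_lt_of_lt_csSup (comboVals_nonempty hx)
    (sub_lt_self (Hfin γ x) hε)
  obtain ⟨vy, hvymem, hvy⟩ := exists_lt_of_lt_csSup (comboVals_nonempty hy)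
    (sub_lt_self (Hfin γ y) hε)
  have hmem := comboVals_add ha hb hab hvxmem hvymem
  have hle : a * vx + b * vy ≤ Hfin γ (a * x + b * y) :=
    le_csSup (comboVals_bddAbove hγ1 _) hmem
  have h1 : a * Hfin γ x ≤ a * (vx + ε) := mul_le_mul_of_nonneg_left (by linarith) ha
  have h2 : b * Hfin γ y ≤ b * (vy + ε) := mul_le_mul_of_nonneg_left (by linarith) hb
  have h3 : a * (vx + ε) + b * (vy + ε) = (a * vx + b * vy) + (a + b) * ε := by ring
  rw [hab, one_mul] at h3
  linarith

lemma exists_combo_close (hγ1 : ∀ x ∈ Icc (0:ℝ) 1, γ x ≤ 1) {u : ℝ}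
    (hu : u ∈ Icc (0:ℝ) 1) {ε : ℝ} (hε : 0 < ε) :
    ∃ v ∈ comboVals γ u, concEnv γ u - ε < v := by
  have h1 : concEnv γ u ≤ Hfin γ u :=
    concEnv_le_maj hu (Hfin_concave hγ1) (fun z hz => le_Hfin' hγ1 hz)
  exact exists_lt_of_lt_csSup (comboVals_nonempty hu)
    (lt_of_lt_of_le (sub_lt_self _ hε) h1 : concEnv γ u - ε < Hfin γ u)

/-- An affine function is concave. -/
lemma affine_concaveOn (k c : ℝ) : ConcaveOn ℝ (Icc (0:ℝ) 1) (fun x => c + k * x) := by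
  refine ⟨convex_Icc 0 1, ?_⟩
  intro x _ y _ a b ha hb hab
  simp only [smul_eq_mul]
  have : a * (c + k * x) + b * (c + k * y) = (a + b) * c + k * (a * x + b * y) := by ring
  rw [this, hab, one_mul]

lemma concEnv_cwa_zero (hγ0 : ∀ x ∈ Icc (0:ℝ) 1, 0 ≤ γ x)
    (hγ1 : ∀ x ∈ Icc (0:ℝ) 1, γ x ≤ 1)
    (h0 : ∀ ε > (0:ℝ), ∃ c, 0 < c ∧ ∀ x ∈ Icc (0:ℝ) 1, x ≤ c → |γ x - γ 0| ≤ ε) :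
    ContinuousWithinAt (concEnv γ) (Icc (0:ℝ) 1) 0 := by
  rw [Metric.continuousWithinAt_iff]
  intro ε hε
  have hε4 : 0 < ε / 4 := by linarith
  obtain ⟨c, hc0, hmod⟩ := h0 (ε / 4) hε4
  have h0mem : (0:ℝ) ∈ Icc (0:ℝ) 1 := ⟨le_refl _, zero_le_one⟩
  have hγ00 : 0 ≤ γ 0 := hγ0 0 h0mem
  set g : ℝ → ℝ := fun x => (γ 0 + ε / 4) + (1 / c) * x with hg
  have hgconc : ConcaveOn ℝ (Icc (0:ℝ) 1) g := affine_concaveOn _ _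
  have hgmaj : ∀ x ∈ Icc (0:ℝ) 1, γ x ≤ g x := by
    intro x hx
    rcases le_or_gt x c with h | h
    · have := hmod x hx h
      have h1 : γ x ≤ γ 0 + ε / 4 := by
        have := abs_le.mp this
        linarith [this.2]
      have h2 : 0 ≤ (1 / c) * x := mul_nonneg (by positivity) hx.1
      simp only [hg]; linarith
    · have h1 : γ x ≤ 1 := hγ1 x hx
      have h2 : (1:ℝ) ≤ (1 / c) * x := by
        rw [div_mul_eq_mul_div, one_mul, le_div_iff₀ hc0, one_mul]
        exact h.le
      simp only [hg]; linarith
  have hA : concEnv γ 0 ≤ γ 0 + ε / 4 := by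
    have := concEnv_le_maj h0mem hgconc hgmaj
    simpa [hg] using this
  have hC : γ 0 ≤ concEnv γ 0 := le_concEnv hγ1 h0mem
  refine ⟨min c (ε / 4 * c), lt_min hc0 (by positivity), ?_⟩
  intro u hu hdist
  rw [Real.dist_eq, sub_zero, abs_of_nonneg hu.1] at hdist
  have huc : u < c := lt_of_lt_of_le hdist (min_le_left _ _)
  have huc2 : u < ε / 4 * c := lt_of_lt_of_le hdist (min_le_right _ _)
  have hB : concEnv γ u ≤ γ 0 + ε / 4 + (1 / c) * u := concEnv_le_maj hu hgconc hgmaj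
  have hB2 : (1 / c) * u < ε / 4 := by
    rw [div_mul_eq_mul_div, one_mul, div_lt_iff₀ hc0]
    linarith
  have hD : γ 0 - ε / 4 ≤ concEnv γ u := by
    have := abs_le.mp (hmod u hu huc.le)
    have h1 : γ 0 - ε / 4 ≤ γ u := by linarith [this.1]
    exact h1.trans (le_concEnv hγ1 hu)
  rw [Real.dist_eq, abs_lt]
  constructor <;> linarith

lemma concEnv_cwa_one (hγ0 : ∀ x ∈ Icc (0:ℝ) 1, 0 ≤ γ x)
    (hγ1 : ∀ x ∈ Icc (0:ℝ) 1, γ x ≤ 1)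
    (h1 : ∀ ε > (0:ℝ), ∃ c, c < 1 ∧ ∀ x ∈ Icc (0:ℝ) 1, c ≤ x → |γ x - γ 1| ≤ ε) :
    ContinuousWithinAt (concEnv γ) (Icc (0:ℝ) 1) 1 := by
  rw [Metric.continuousWithinAt_iff]
  intro ε hε
  have hε4 : 0 < ε / 4 := by linarith
  obtain ⟨c, hc1, hmod⟩ := h1 (ε / 4) hε4
  have h1mem : (1:ℝ) ∈ Icc (0:ℝ) 1 := ⟨zero_le_one, le_refl _⟩
  have hγ10 : 0 ≤ γ 1 := hγ0 1 h1mem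
  have hc1' : 0 < 1 - c := by linarith
  set g : ℝ → ℝ := fun x => (γ 1 + ε / 4 + 1 / (1 - c)) + (-(1 / (1 - c))) * x with hg
  have hgconc : ConcaveOn ℝ (Icc (0:ℝ) 1) g := affine_concaveOn _ _
  have hgval : ∀ x, g x = γ 1 + ε / 4 + (1 - x) / (1 - c) := by
    intro x; simp only [hg]; field_simp; ring
  have hgmaj : ∀ x ∈ Icc (0:ℝ) 1, γ x ≤ g x := by
    intro x hx
    rw [hgval]
    rcases le_or_gt c x with h | h
    · have := abs_le.mp (hmod x hx h)
      have h2 : 0 ≤ (1 - x) / (1 - c) := div_nonneg (by linarith [hx.2]) hc1'.le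
      linarith [this.2]
    · have hup : γ x ≤ 1 := hγ1 x hx
      have h2 : (1:ℝ) ≤ (1 - x) / (1 - c) := by
        rw [le_div_iff₀ hc1', one_mul]
        linarith
      linarith
  have hA : concEnv γ 1 ≤ γ 1 + ε / 4 := by
    have := concEnv_le_maj h1mem hgconc hgmaj
    rw [hgval] at this
    simpa using this
  have hC : γ 1 ≤ concEnv γ 1 := le_concEnv hγ1 h1mem
  refine ⟨min (1 - c) (ε / 4 * (1 - c)), lt_min hc1' (by positivity), ?_⟩
  intro u hu hdist
  rw [Real.dist_eq, abs_of_nonpos (by linarith [hu.2])] at hdist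
  have huc : c < u := by
    have : 1 - u < 1 - c := lt_of_lt_of_le (by linarith) (min_le_left _ _)
    linarith
  have huc2 : 1 - u < ε / 4 * (1 - c) := lt_of_lt_of_le (by linarith) (min_le_right _ _)
  have hB : concEnv γ u ≤ γ 1 + ε / 4 + (1 - u) / (1 - c) := by
    have := concEnv_le_maj hu hgconc hgmaj
    rwa [hgval] at this
  have hB2 : (1 - u) / (1 - c) < ε / 4 := by
    rw [div_lt_iff₀ hc1']
    linarith
  have hD : γ 1 - ε / 4 ≤ concEnv γ u := by
    have := abs_le.mp (hmod u hu huc.le)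
    have hh : γ 1 - ε / 4 ≤ γ u := by linarith [this.1]
    exact hh.trans (le_concEnv hγ1 hu)
  rw [Real.dist_eq, abs_lt]
  constructor <;> linarith

lemma concEnv_continuousOn (hγ0 : ∀ x ∈ Icc (0:ℝ) 1, 0 ≤ γ x)
    (hγ1 : ∀ x ∈ Icc (0:ℝ) 1, γ x ≤ 1)
    (h0 : ∀ ε > (0:ℝ), ∃ c, 0 < c ∧ ∀ x ∈ Icc (0:ℝ) 1, x ≤ c → |γ x - γ 0| ≤ ε)
    (h1 : ∀ ε > (0:ℝ), ∃ c, c < 1 ∧ ∀ x ∈ Icc (0:ℝ) 1, c ≤ x → |γ x - γ 1| ≤ ε) :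
    ContinuousOn (concEnv γ) (Icc (0:ℝ) 1) := by
  intro x hx
  rcases eq_or_lt_of_le hx.1 with h | h
  · rw [← h]; exact concEnv_cwa_zero hγ0 hγ1 h0
  rcases eq_or_lt_of_le hx.2 with h2 | h2
  · rw [h2]; exact concEnv_cwa_one hγ0 hγ1 h1
  · have hI : ContinuousOn (concEnv γ) (interior (Icc (0:ℝ) 1)) :=
      (concEnv_concave hγ1).continuousOn_interior
    rw [interior_Icc] at hI
    exact (hI.continuousAt (Ioo_mem_nhds h h2)).continuousWithinAt

end AuxEnv

section AuxGammaEnv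

variable {Θ : Type*} [Fintype Θ]

lemma concEnv_gamma_contOn (E : Env Θ) (θ : Θ) :
    ContinuousOn (concEnv (γθ E θ)) (Icc (0:ℝ) 1) := by
  refine concEnv_continuousOn (gamma_nonneg E θ) (gamma_le_one E θ) ?_ ?_
  · intro ε hε
    obtain ⟨c, hc, hmod⟩ := gamma_cont_zero E θ hε
    exact ⟨c, hc, hmod⟩
  · intro ε hε
    obtain ⟨c, hc, hmod⟩ := gamma_cont_one E θ hε
    exact ⟨c, hc, hmod⟩

end AuxGammaEnv

section AuxInt

variable {Θ : Type*} [Fintype Θ]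

lemma ae_mem_Icc (μ : Measure ℝ) [IsProbabilityMeasure μ] (hs : μ (Icc 0 1) = 1) :
    ∀ᵐ a ∂μ, a ∈ Icc (0:ℝ) 1 := by
  rw [ae_iff]
  have h := measure_compl (measurableSet_Icc : MeasurableSet (Icc (0:ℝ) 1)) (measure_ne_top μ _)
  rw [measure_univ, hs, tsub_self] at h
  simpa [Set.compl_def] using h

lemma integrable_of_bdd {μ : Measure ℝ} [IsProbabilityMeasure μ] (hs : μ (Icc 0 1) = 1)
    {f : ℝ → ℝ} (hf : AEStronglyMeasurable f μ)
    (hb : ∀ x ∈ Icc (0:ℝ) 1, f x ∈ Icc (0:ℝ) 1) : Integrable f μ := by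
  refine Integrable.mono' (integrable_const 1) hf ?_
  filter_upwards [ae_mem_Icc μ hs] with a ha
  have h2 := hb a ha
  rw [Real.norm_eq_abs, abs_le]
  exact ⟨by linarith [h2.1], h2.2⟩

lemma integral_mem_Icc {μ : Measure ℝ} [IsProbabilityMeasure μ] (hs : μ (Icc 0 1) = 1)
    {f : ℝ → ℝ} (hf : AEStronglyMeasurable f μ)
    (hb : ∀ x ∈ Icc (0:ℝ) 1, f x ∈ Icc (0:ℝ) 1) : ∫ a, f a ∂μ ∈ Icc (0:ℝ) 1 := by
  have hint := integrable_of_bdd hs hf hb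
  constructor
  · apply integral_nonneg_of_ae
    filter_upwards [ae_mem_Icc μ hs] with a ha
    exact (hb a ha).1
  · have h2 : ∫ a, f a ∂μ ≤ ∫ _, (1:ℝ) ∂μ := by
      apply integral_mono_ae hint (integrable_const 1)
      filter_upwards [ae_mem_Icc μ hs] with a ha
      exact (hb a ha).2
    simpa using h2

/-- Jensen's inequality for the concavified payoff. -/
lemma integral_uP_le (E : Env Θ) (θ : Θ) (μ : Measure ℝ) [IsProbabilityMeasure μ]
    (hs : μ (Icc 0 1) = 1) :
    ∫ a, E.uP a θ ∂μ ≤ concEnv (γθ E θ) (∫ a, E.uA a ∂μ) := by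
  set G := concEnv (γθ E θ) with hG
  have hγ0 := gamma_nonneg E θ
  have hγ1 := gamma_le_one E θ
  have hGconc : ConcaveOn ℝ (Icc (0:ℝ) 1) G := concEnv_concave hγ1
  have hGcont : ContinuousOn G (Icc (0:ℝ) 1) := concEnv_gamma_contOn E θ
  have hGmem : ∀ y ∈ Icc (0:ℝ) 1, G y ∈ Icc (0:ℝ) 1 :=
    fun y hy => ⟨concEnv_nonneg hγ0 hγ1 hy, concEnv_le_one hγ1 hy⟩
  -- clamped composition
  have hclampmem : ∀ a : ℝ, max 0 (min a 1) ∈ Icc (0:ℝ) 1 :=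
    fun a => ⟨le_max_left _ _, max_le zero_le_one (min_le_right _ _)⟩
  have hclampcont : Continuous fun a : ℝ => E.uA (max 0 (min a 1)) :=
    E.uA_cont.comp (continuous_const.max (continuous_id.min continuous_const))
  have hclampval : ∀ a : ℝ, E.uA (max 0 (min a 1)) ∈ Icc (0:ℝ) 1 :=
    fun a => E.uA_mem _ (hclampmem a)
  have hhcont : Continuous fun a : ℝ => G (E.uA (max 0 (min a 1))) :=
    hGcont.comp_continuous hclampcont hclampval
  have hEq : (fun a => G (E.uA a)) =ᵐ[μ] fun a => G (E.uA (max 0 (min a 1))) := by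
    filter_upwards [ae_mem_Icc μ hs] with a ha
    rw [min_eq_left ha.2, max_eq_right ha.1]
  have hIntH : Integrable (fun a => G (E.uA (max 0 (min a 1)))) μ :=
    integrable_of_bdd hs hhcont.aestronglyMeasurable
      (fun x _ => hGmem _ (hclampval x))
  have hIntG : Integrable (fun a => G (E.uA a)) μ := hIntH.congr hEq.symm
  have hIntuA : Integrable E.uA μ :=
    integrable_of_bdd hs E.uA_cont.aestronglyMeasurable E.uA_mem
  have hJ : ∫ a, G (E.uA a) ∂μ ≤ G (∫ a, E.uA a ∂μ) := by
    refine hGconc.le_map_integral hGcont isClosed_Icc ?_ hIntuA hIntG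
    filter_upwards [ae_mem_Icc μ hs] with a ha using E.uA_mem a ha
  have hIntuP : Integrable (fun a => E.uP a θ) μ :=
    integrable_of_bdd hs (E.uP_cont θ).aestronglyMeasurable (fun x hx => E.uP_mem x hx θ)
  have hPoint : ∫ a, E.uP a θ ∂μ ≤ ∫ a, G (E.uA a) ∂μ := by
    apply integral_mono_ae hIntuP hIntG
    filter_upwards [ae_mem_Icc μ hs] with a ha
    rw [← gamma_uA E θ ha]
    exact le_concEnv hγ1 (E.uA_mem a ha)
  exact hPoint.trans hJ

end AuxInt

section AuxUpper

variable {Θ M : Type*} [Fintype Θ] [Fintype M]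

/-- Upper bound: any equilibrium payoff is dominated by the concavified payoff at the
agent's equilibrium payoff level. -/
theorem payoff_le (E : Env Θ) (Q : Mech M) (e : Eqm E Q) :
    ∃ u ∈ Icc (0:ℝ) 1, V E Q e ≤ ∑ θ, E.ρ θ * concEnv (γθ E θ) u := by
  classical
  haveI hπP : ∀ m, IsProbabilityMeasure (Q.π m) := Q.π_prob
  haveI hσP : ∀ m, IsProbabilityMeasure (e.σP m) := fun m => (e.br.1 m).1
  set cπ : M → ℝ := fun m => ∫ a, E.uA a ∂(Q.π m) with hcπ
  set cσ : M → ℝ := fun m => ∫ a, E.uA a ∂(e.σP m) with hcσ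
  have hcπm : ∀ m, cπ m ∈ Icc (0:ℝ) 1 := fun m =>
    integral_mem_Icc (Q.π_supp m) E.uA_cont.aestronglyMeasurable E.uA_mem
  have hcσm : ∀ m, cσ m ∈ Icc (0:ℝ) 1 := fun m =>
    integral_mem_Icc (e.br.1 m).2 E.uA_cont.aestronglyMeasurable E.uA_mem
  have hχ0 : 0 ≤ Q.χ := Q.χ_nonneg
  have hχ1 : 0 ≤ 1 - Q.χ := by linarith [Q.χ_le_one]
  -- the agent's common on-path payoff
  have hUAeq : ∀ m, UA E Q e.σP m = Q.χ * cπ m + (1 - Q.χ) * cσ m := fun m => rfl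
  have hUAmem : ∀ m, UA E Q e.σP m ∈ Icc (0:ℝ) 1 := by
    intro m
    rw [hUAeq]
    constructor
    · have := (hcπm m).1; have := (hcσm m).1
      positivity
    · nlinarith [(hcπm m).2, (hcσm m).2, (hcπm m).1, (hcσm m).1]
  -- existence of an on-path message
  have hsum : ∑ m, msgProb E e.σA m = 1 := by
    unfold msgProb
    rw [Finset.sum_comm]
    have : ∀ θ : Θ, ∑ m, E.ρ θ * e.σA θ m = E.ρ θ := by
      intro θ; rw [← Finset.mul_sum, e.strat.2 θ, mul_one]
    rw [Finset.sum_congr rfl fun θ _ => this θ, E.ρ_sum]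
  have hm0 : ∃ m0 : M, 0 < msgProb E e.σA m0 := by
    by_contra h
    push_neg at h
    have : ∑ m, msgProb E e.σA m ≤ 0 := Finset.sum_nonpos fun m _ => h m
    linarith
  obtain ⟨m0, hm0⟩ := hm0
  have hθ0 : ∃ θ0 : Θ, 0 < e.σA θ0 m0 := by
    by_contra h
    push_neg at h
    have : msgProb E e.σA m0 ≤ 0 := by
      apply Finset.sum_nonpos
      intro θ _
      have := h θ
      nlinarith [(E.ρ_pos θ).le]
    linarith
  obtain ⟨θ0, hθ0⟩ := hθ0
  set u : ℝ := UA E Q e.σP m0 with hu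
  have humem : u ∈ Icc (0:ℝ) 1 := hUAmem m0
  have hkey : ∀ θ m, 0 < e.σA θ m → UA E Q e.σP m = u := by
    intro θ m hpos
    exact le_antisymm (e.ao θ0 m0 hθ0 m) (e.ao θ m hpos m0)
  refine ⟨u, humem, ?_⟩
  set G : Θ → ℝ → ℝ := fun θ => concEnv (γθ E θ) with hGdef
  have hGconc : ∀ θ, ConcaveOn ℝ (Icc (0:ℝ) 1) (G θ) := fun θ => concEnv_concave (gamma_le_one E θ)
  have hcoef : ∀ θ m, 0 ≤ E.ρ θ * e.σA θ m :=
    fun θ m => mul_nonneg (E.ρ_pos θ).le (e.strat.1 θ m)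
  have hS1 : ∑ θ, ∑ m, E.ρ θ * e.σA θ m * ∫ a, E.uP a θ ∂(Q.π m)
      ≤ ∑ θ, ∑ m, E.ρ θ * e.σA θ m * G θ (cπ m) := by
    refine Finset.sum_le_sum fun θ _ => Finset.sum_le_sum fun m _ => ?_
    exact mul_le_mul_of_nonneg_left (integral_uP_le E θ (Q.π m) (Q.π_supp m)) (hcoef θ m)
  have hS2 : ∑ θ, ∑ m, E.ρ θ * e.σA θ m * ∫ a, E.uP a θ ∂(e.σP m)
      ≤ ∑ θ, ∑ m, E.ρ θ * e.σA θ m * G θ (cσ m) := by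
    refine Finset.sum_le_sum fun θ _ => Finset.sum_le_sum fun m _ => ?_
    exact mul_le_mul_of_nonneg_left (integral_uP_le E θ (e.σP m) (e.br.1 m).2) (hcoef θ m)
  have hstep : V E Q e ≤ ∑ θ, ∑ m, E.ρ θ * e.σA θ m *
      (Q.χ * G θ (cπ m) + (1 - Q.χ) * G θ (cσ m)) := by
    unfold V
    have h1 := mul_le_mul_of_nonneg_left hS1 hχ0
    have h2 := mul_le_mul_of_nonneg_left hS2 hχ1
    have h3 : Q.χ * ∑ θ, ∑ m, E.ρ θ * e.σA θ m * G θ (cπ m) +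
        (1 - Q.χ) * ∑ θ, ∑ m, E.ρ θ * e.σA θ m * G θ (cσ m) =
        ∑ θ, ∑ m, E.ρ θ * e.σA θ m *
          (Q.χ * G θ (cπ m) + (1 - Q.χ) * G θ (cσ m)) := by
      simp only [Finset.mul_sum, ← Finset.sum_add_distrib]
      refine Finset.sum_congr rfl fun θ _ => Finset.sum_congr rfl fun m _ => by ring
    linarith
  have hstep2 : ∑ θ, ∑ m, E.ρ θ * e.σA θ m *
      (Q.χ * G θ (cπ m) + (1 - Q.χ) * G θ (cσ m)) ≤
      ∑ θ, ∑ m, E.ρ θ * e.σA θ m * G θ u := by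
    refine Finset.sum_le_sum fun θ _ => Finset.sum_le_sum fun m _ => ?_
    rcases (e.strat.1 θ m).eq_or_lt with h | h
    · rw [← h]; simp
    · refine mul_le_mul_of_nonneg_left ?_ (hcoef θ m)
      have hcomb := (hGconc θ).2 (hcπm m) (hcσm m) hχ0 hχ1 (by ring)
      simp only [smul_eq_mul] at hcomb
      have : Q.χ * cπ m + (1 - Q.χ) * cσ m = u := by
        rw [← hUAeq m]; exact hkey θ m h
      rw [this] at hcomb
      exact hcomb
  have hstep3 : ∑ θ, ∑ m, E.ρ θ * e.σA θ m * G θ u = ∑ θ, E.ρ θ * G θ u := by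
    refine Finset.sum_congr rfl fun θ _ => ?_
    calc ∑ m, E.ρ θ * e.σA θ m * G θ u = ∑ m, e.σA θ m * (E.ρ θ * G θ u) :=
          Finset.sum_congr rfl fun m _ => by ring
      _ = (∑ m, e.σA θ m) * (E.ρ θ * G θ u) := (Finset.sum_mul _ _ _).symm
      _ = E.ρ θ * G θ u := by rw [e.strat.2 θ, one_mul]
  calc V E Q e ≤ _ := hstep
    _ ≤ _ := hstep2
    _ = ∑ θ, E.ρ θ * G θ u := hstep3

end AuxUpper

section AuxConstruct

variable {Θ M : Type*} [Fintype Θ] [Fintype M]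

/-- Construction: for every `u ∈ [0,1]` and `ε > 0`, a full-commitment mechanism
yields an equilibrium payoff within `ε` of the concavified payoff at `u`. -/
theorem exists_mech (E : Env Θ) (hn : 2 ≤ Fintype.card Θ)
    (hM : Fintype.card Θ ≤ Fintype.card M)
    {u : ℝ} (hu : u ∈ Icc (0:ℝ) 1) {ε : ℝ} (hε : 0 < ε) :
    ∃ (Q : Mech M) (e : Eqm E Q),
      (∑ θ, E.ρ θ * concEnv (γθ E θ) u) - ε ≤ V E Q e := by
  classical
  obtain ⟨ι⟩ : Nonempty (Θ ↪ M) := Function.Embedding.nonempty_of_card_le hM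
  -- near-optimal finite combinations, one per state
  have hcombo : ∀ θ : Θ, ∃ w, w ∈ comboVals (γθ E θ) u ∧ concEnv (γθ E θ) u - ε < w := by
    intro θ
    obtain ⟨w, h1, h2⟩ := exists_combo_close (gamma_le_one E θ) hu hε
    exact ⟨w, h1, h2⟩
  choose w hwmem hwgt using hcombo
  have hwmem' : ∀ θ, ∃ (n : ℕ) (p x : Fin n → ℝ), (∀ i, 0 ≤ p i) ∧ (∑ i, p i) = 1 ∧
      (∀ i, x i ∈ Icc (0:ℝ) 1) ∧ (∑ i, p i * x i) = u ∧ w θ = ∑ i, p i * γθ E θ (x i) :=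
    fun θ => hwmem θ
  choose n p x hp hs hx hxs hwval using hwmem'
  have hξmem : ∀ θ i, aInv E (x θ i) ∈ Icc (0:ℝ) 1 := fun θ i => aInv_mem E (hx θ i)
  have hξuA : ∀ θ i, E.uA (aInv E (x θ i)) = x θ i := fun θ i => uA_aInv E (hx θ i)
  set ξ : (θ : Θ) → Fin (n θ) → ℝ := fun θ i => aInv E (x θ i) with hξdef
  have hbumem : aInv E u ∈ Icc (0:ℝ) 1 := aInv_mem E hu
  have hbuuA : E.uA (aInv E u) = u := uA_aInv E hu
  set bu : ℝ := aInv E u with hbu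
  -- atomic committed lotteries
  set mix : Θ → Measure ℝ := fun θ =>
    ∑ i : Fin (n θ), (ENNReal.ofReal (p θ i)) • Measure.dirac (ξ θ i) with hmixdef
  have hmix_apply : ∀ θ (s : Set ℝ), (∀ i, ξ θ i ∈ s) → mix θ s = 1 := by
    intro θ s hmem
    rw [hmixdef]
    rw [Measure.finset_sum_apply]
    have hterm : ∀ i ∈ Finset.univ, ((ENNReal.ofReal (p θ i)) • Measure.dirac (ξ θ i)) s
        = ENNReal.ofReal (p θ i) := by
      intro i _
      rw [Measure.smul_apply, Measure.dirac_apply_of_mem (hmem i), smul_eq_mul, mul_one]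
    rw [Finset.sum_congr rfl hterm, ← ENNReal.ofReal_sum_of_nonneg (fun i _ => hp θ i), hs θ,
      ENNReal.ofReal_one]
  have hmix_int : ∀ (f : ℝ → ℝ), Continuous f → (∀ y ∈ Icc (0:ℝ) 1, f y ∈ Icc (0:ℝ) 1) →
      ∀ θ, ∫ a, f a ∂(mix θ) = ∑ i, p θ i * f (ξ θ i) := by
    intro f hf hfb θ
    have hint : ∀ i : Fin (n θ),
        Integrable f ((ENNReal.ofReal (p θ i)) • Measure.dirac (ξ θ i)) := by
      intro i
      refine Integrable.smul_measure ?_ ENNReal.ofReal_ne_top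
      exact integrable_of_bdd (Measure.dirac_apply_of_mem (hξmem θ i))
        hf.aestronglyMeasurable hfb
    rw [hmixdef, integral_finset_sum_measure (fun i _ => hint i)]
    refine Finset.sum_congr rfl fun i _ => ?_
    rw [integral_smul_measure, integral_dirac, ENNReal.toReal_ofReal (hp θ i), smul_eq_mul]
  -- the action plan
  set π : M → Measure ℝ := fun m =>
    if h : ∃ θ, ι θ = m then mix h.choose else Measure.dirac bu with hπdef
  have hπι : ∀ θ, π (ι θ) = mix θ := by
    intro θ
    have hh : ∃ θ', ι θ' = ι θ := ⟨θ, rfl⟩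
    simp only [hπdef]
    rw [dif_pos hh]
    exact congrArg mix (ι.injective (Exists.choose_spec hh))
  have hπoff : ∀ m, (¬ ∃ θ, ι θ = m) → π m = Measure.dirac bu := by
    intro m h; simp only [hπdef]; rw [dif_neg h]
  have hQP : ∀ m, IsProbabilityMeasure (π m) := by
    intro m
    by_cases h : ∃ θ, ι θ = m
    · obtain ⟨θ, rfl⟩ := h
      rw [hπι θ]
      exact ⟨hmix_apply θ univ (fun i => mem_univ _)⟩
    · rw [hπoff m h]; infer_instance
  have hQS : ∀ m, π m (Icc 0 1) = 1 := by
    intro m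
    by_cases h : ∃ θ, ι θ = m
    · obtain ⟨θ, rfl⟩ := h
      rw [hπι θ]
      exact hmix_apply θ _ (hξmem θ)
    · rw [hπoff m h]
      exact Measure.dirac_apply_of_mem hbumem
  let Q : Mech M := ⟨π, hQP, hQS, 1, zero_le_one, le_refl 1⟩
  -- principal's optimal pure actions per state
  have haux : ∀ θ : Θ, ∃ a, a ∈ Icc (0:ℝ) 1 ∧ ∀ b ∈ Icc (0:ℝ) 1, E.uP b θ ≤ E.uP a θ := by
    intro θ
    obtain ⟨a, ha, hmax⟩ := isCompact_Icc.exists_isMaxOn (nonempty_Icc.mpr zero_le_one)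
      (E.uP_cont θ).continuousOn
    exact ⟨a, ha, fun b hb => hmax hb⟩
  choose astar hastar hastarmax using haux
  set σA : Θ → M → ℝ := fun θ m => if m = ι θ then (1:ℝ) else 0 with hσAdef
  set σP : M → Measure ℝ := fun m =>
    if h : ∃ θ, ι θ = m then Measure.dirac (astar h.choose) else Measure.dirac 0 with hσPdef
  have hσPι : ∀ θ, σP (ι θ) = Measure.dirac (astar θ) := by
    intro θ
    have hh : ∃ θ', ι θ' = ι θ := ⟨θ, rfl⟩
    simp only [hσPdef]
    rw [dif_pos hh]
    exact congrArg (fun z => Measure.dirac (astar z)) (ι.injective (Exists.choose_spec hh))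
  have hσPoff : ∀ m, (¬ ∃ θ, ι θ = m) → σP m = Measure.dirac 0 := by
    intro m h; simp only [hσPdef]; rw [dif_neg h]
  have hstrat : IsStrategy σA := by
    constructor
    · intro θ m; simp only [hσAdef]; split <;> norm_num
    · intro θ
      simp only [hσAdef]
      rw [Finset.sum_ite_eq' Finset.univ (ι θ) (fun _ => (1:ℝ))]
      simp
  have hmsg : ∀ θ, msgProb E σA (ι θ) = E.ρ θ := by
    intro θ
    unfold msgProb
    rw [Finset.sum_eq_single θ]
    · simp [hσAdef]
    · intro θ' _ hne
      have hne2 : ¬ (ι θ = ι θ') := fun hc => hne (ι.injective hc).symm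
      simp [hσAdef, hne2]
    · intro h; exact absurd (Finset.mem_univ θ) h
  have hmsg_off : ∀ m, (¬ ∃ θ, ι θ = m) → msgProb E σA m = 0 := by
    intro m h
    unfold msgProb
    apply Finset.sum_eq_zero
    intro θ' _
    have hne : ¬ (m = ι θ') := fun hc => h ⟨θ', hc.symm⟩
    simp [hσAdef, hne]
  have honpath : ∀ m, OnPath E σA m → ∃ θ, ι θ = m := by
    intro m hOP
    by_contra hc
    unfold OnPath at hOP
    rw [hmsg_off m hc] at hOP
    exact lt_irrefl 0 hOP
  have hpUtil : ∀ θ (b : ℝ), pUtil E (posterior E σA (ι θ)) b = E.uP b θ := by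
    intro θ b
    unfold pUtil posterior
    rw [Finset.sum_eq_single θ]
    · rw [hmsg θ]
      have hρ : E.ρ θ ≠ 0 := (E.ρ_pos θ).ne'
      simp only [hσAdef, if_pos rfl]
      field_simp
    · intro θ' _ hne
      have hne2 : ¬ (ι θ = ι θ') := fun hc => hne (ι.injective hc).symm
      simp [hσAdef, hne2]
    · intro h; exact absurd (Finset.mem_univ θ) h
  have hIπ : ∀ m, ∫ a, E.uA a ∂(π m) = u := by
    intro m
    by_cases h : ∃ θ, ι θ = m
    · obtain ⟨θ, rfl⟩ := h
      rw [hπι θ, hmix_int E.uA E.uA_cont E.uA_mem θ]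
      calc ∑ i, p θ i * E.uA (ξ θ i) = ∑ i, p θ i * x θ i :=
            Finset.sum_congr rfl fun i _ => by rw [hξuA]
        _ = u := hxs θ
    · rw [hπoff m h, integral_dirac, hbuuA]
  have hUA : ∀ m, UA E Q σP m = u := by
    intro m
    show Q.χ * (∫ a, E.uA a ∂(Q.π m)) + (1 - Q.χ) * uAOf E σP m = u
    have hQχ : Q.χ = 1 := rfl
    have hQπ : Q.π = π := rfl
    rw [hQχ, hQπ, hIπ m]
    ring
  have hbr : IsBR E σA σP := by
    refine ⟨?_, ?_, ?_⟩
    · intro m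
      by_cases h : ∃ θ, ι θ = m
      · obtain ⟨θ, rfl⟩ := h
        rw [hσPι θ]
        exact ⟨inferInstance, Measure.dirac_apply_of_mem (hastar θ)⟩
      · rw [hσPoff m h]
        exact ⟨inferInstance, Measure.dirac_apply_of_mem ⟨le_refl 0, zero_le_one⟩⟩
    · intro m hOP
      obtain ⟨θ, rfl⟩ := honpath m hOP
      rw [hσPι θ]
      apply Measure.dirac_apply_of_mem
      refine ⟨hastar θ, ?_⟩
      intro b hb
      rw [hpUtil θ b, hpUtil θ (astar θ)]
      exact hastarmax θ b hb
    · intro m hOP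
      have h : ¬ ∃ θ, ι θ = m := by
        intro hc
        obtain ⟨θ, rfl⟩ := hc
        apply hOP
        unfold OnPath
        rw [hmsg θ]
        exact E.ρ_pos θ
      unfold uAOf
      rw [hσPoff m h, integral_dirac, E.uA_zero]
  have hao : ∀ θ m, 0 < σA θ m → ∀ m', UA E Q σP m' ≤ UA E Q σP m :=
    fun θ m _ m' => by rw [hUA m, hUA m']
  have hnpp : ∀ m, msgProb E σA m < 1 := by
    intro m
    by_cases h : ∃ θ, ι θ = m
    · obtain ⟨θ, rfl⟩ := h
      rw [hmsg θ]
      obtain ⟨θ', hθ'⟩ := Fintype.exists_ne_of_one_lt_card (by omega) θ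
      have h1 : E.ρ θ + ∑ θ'' ∈ Finset.univ.erase θ, E.ρ θ'' = 1 := by
        rw [Finset.add_sum_erase _ _ (Finset.mem_univ θ)]
        exact E.ρ_sum
      have h2 : 0 < ∑ θ'' ∈ Finset.univ.erase θ, E.ρ θ'' := by
        apply Finset.sum_pos (fun i _ => E.ρ_pos i)
        exact ⟨θ', Finset.mem_erase.mpr ⟨hθ', Finset.mem_univ θ'⟩⟩
      linarith
    · rw [hmsg_off m h]; norm_num
  let e : Eqm E Q := ⟨σA, σP, hstrat, hbr, hao, hnpp⟩
  refine ⟨Q, e, ?_⟩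
  have hVeq : V E Q e = ∑ θ, E.ρ θ * ∑ i, p θ i * E.uP (ξ θ i) θ := by
    show Q.χ * (∑ θ, ∑ m, E.ρ θ * σA θ m * ∫ a, E.uP a θ ∂(π m)) +
      (1 - Q.χ) * (∑ θ, ∑ m, E.ρ θ * σA θ m * ∫ a, E.uP a θ ∂(σP m)) = _
    have hQχ : Q.χ = (1:ℝ) := rfl
    rw [hQχ, sub_self, zero_mul, add_zero, one_mul]
    refine Finset.sum_congr rfl fun θ _ => ?_
    rw [Finset.sum_eq_single (ι θ)]
    · have hσ1 : σA θ (ι θ) = 1 := by simp [hσAdef]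
      rw [hσ1, mul_one, hπι θ,
        hmix_int (fun a => E.uP a θ) (E.uP_cont θ) (fun y hy => E.uP_mem y hy θ) θ]
    · intro m _ hne
      have hz : σA θ m = 0 := by simp [hσAdef, hne]
      rw [hz, mul_zero, zero_mul]
    · intro h; exact absurd (Finset.mem_univ _) h
  rw [hVeq]
  have hterm : ∀ θ, E.ρ θ * concEnv (γθ E θ) u - E.ρ θ * ε ≤
      E.ρ θ * ∑ i, p θ i * E.uP (ξ θ i) θ := by
    intro θ
    have hval2 : ∑ i, p θ i * E.uP (ξ θ i) θ = w θ := by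
      rw [hwval θ]
      refine Finset.sum_congr rfl fun i _ => ?_
      rw [← hξuA θ i, gamma_uA E θ (hξmem θ i)]
    rw [hval2]
    have h2 : E.ρ θ * (concEnv (γθ E θ) u - ε) ≤ E.ρ θ * w θ :=
      mul_le_mul_of_nonneg_left (hwgt θ).le (E.ρ_pos θ).le
    have h3 : E.ρ θ * (concEnv (γθ E θ) u - ε) =
        E.ρ θ * concEnv (γθ E θ) u - E.ρ θ * ε := by ring
    linarith
  have hsum2 : ∑ θ, (E.ρ θ * concEnv (γθ E θ) u - E.ρ θ * ε) ≤
      ∑ θ, E.ρ θ * ∑ i, p θ i * E.uP (ξ θ i) θ :=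
    Finset.sum_le_sum fun θ _ => hterm θ
  have hsum3 : ∑ θ, (E.ρ θ * concEnv (γθ E θ) u - E.ρ θ * ε)
      = (∑ θ, E.ρ θ * concEnv (γθ E θ) u) - ε := by
    rw [Finset.sum_sub_distrib, ← Finset.sum_mul, E.ρ_sum, one_mul]
  linarith

end AuxConstruct

/-- The principal's optimal payoff satisfies
`V̄ = max_{u ∈ [0,1]} ∑ θ, ρ θ * γ_θ^co u`, where `γ_θ^co` is the concave
envelope of the mutual payoff function `γ_θ`. -/
theorem optimal_payoff_concavification
    {Θ M : Type*} [Fintype Θ] [Fintype M] (E : Env Θ)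
    (hn : 2 ≤ Fintype.card Θ) (hM : Fintype.card Θ ≤ Fintype.card M) :
    IsGreatest {v | ∃ u ∈ Icc (0:ℝ) 1, v = ∑ θ, E.ρ θ * concEnv (γθ E θ) u}
      (Vbar E M) := by
  classical
  set F : ℝ → ℝ := fun u => ∑ θ, E.ρ θ * concEnv (γθ E θ) u with hFdef
  have hFcont : ContinuousOn F (Icc (0:ℝ) 1) := by
    apply continuousOn_finset_sum
    intro θ _
    exact continuousOn_const.mul (concEnv_gamma_contOn E θ)
  obtain ⟨u0, hu0, hmax⟩ := isCompact_Icc.exists_isMaxOn (nonempty_Icc.mpr zero_le_one) hFcont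
  have hmax' : ∀ z ∈ Icc (0:ℝ) 1, F z ≤ F u0 := fun z hz => hmax hz
  set T : Set ℝ := {v | ∃ Q : Mech M, v ∈ eqPayoffs E Q} with hTdef
  have hub : ∀ v ∈ T, v ≤ F u0 := by
    rintro v ⟨Q, e, rfl⟩
    obtain ⟨z, hz, hle⟩ := payoff_le E Q e
    exact hle.trans (hmax' z hz)
  have hbdd : BddAbove T := ⟨F u0, fun v hv => hub v hv⟩
  have hne : T.Nonempty := by
    obtain ⟨Q, e, _⟩ := exists_mech (M := M) E hn hM (u := 0) ⟨le_refl 0, zero_le_one⟩ one_pos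
    exact ⟨V E Q e, Q, e, rfl⟩
  have hge : ∀ z ∈ Icc (0:ℝ) 1, F z ≤ sSup T := by
    intro z hz
    apply _root_.le_of_forall_pos_le_add
    intro ε hε
    obtain ⟨Q, e, hQe⟩ := exists_mech (M := M) E hn hM hz hε
    have hmem : V E Q e ∈ T := ⟨Q, e, rfl⟩
    have := le_csSup hbdd hmem
    have hFz : F z - ε ≤ V E Q e := hQe
    linarith
  have hVbarT : Vbar E M = sSup T := rfl
  have heq : sSup T = F u0 := le_antisymm (csSup_le hne hub) (hge u0 hu0)
  constructor
  · exact ⟨u0, hu0, by rw [hVbarT, heq]⟩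
  · rintro v ⟨z, hz, rfl⟩
    rw [hVbarT, heq]
    exact hmax' z hz

end CheapTalk
end
end

section
/- Under the naive mechanism Q_N (commitment probability χ = 1/2, committed actions π(l) = 0 and π(h) = 1), there is a unique non-trivial equilibrium, and in it the agent's messaging strategy is the inverted separating strategy: σ_A(m = h | θ_l) = 1 and σ_A(m = l | θ_h) = 1 (Socrates Effect). -/
noncomputable section

namespace Socrates

/-- The naive mechanism's committed action: `π(l) = 0`, `π(h) = 1`
(message `h = true`, `l = false`). -/
def committed : Bool → ℝ := fun m => if m then 1 else 0

/-- Ex-ante probability of message `m` (state `θ_h = true`, `θ_l = false`,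
prior probability `ρ` of `θ_h`). -/
def pmsg (ρ : ℝ) (σ : Bool → Bool → ℝ) (m : Bool) : ℝ :=
  ρ * σ true m + (1 - ρ) * σ false m

/-- Posterior probability of the high state `θ_h` given message `m`. -/
def post (ρ : ℝ) (σ : Bool → Bool → ℝ) (m : Bool) : ℝ :=
  ρ * σ true m / pmsg ρ σ m

/-- The agent's expected payoff from sending `m` under the naive mechanism
(`χ = 1/2`, uncommitted best response `a ∘ post`, pessimistic off path). -/
def payoff (ρ : ℝ) (a : ℝ → ℝ) (σ : Bool → Bool → ℝ) (m : Bool) : ℝ :=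
  (1 / 2 : ℝ) * committed m +
    (1 / 2 : ℝ) * (if 0 < pmsg ρ σ m then a (post ρ σ m) else 0)

/-- A non-trivial equilibrium of the naive mechanism: a mixed messaging strategy
with no perfectly pooling message, in which every message sent with positive
probability maximizes the agent's expected payoff. -/
def IsNTEqm (ρ : ℝ) (a : ℝ → ℝ) (σ : Bool → Bool → ℝ) : Prop :=
  (∀ θ m, 0 ≤ σ θ m) ∧ (∀ θ, σ θ true + σ θ false = 1) ∧
    (∀ m, pmsg ρ σ m < 1) ∧
    (∀ θ m, 0 < σ θ m → ∀ m', payoff ρ a σ m' ≤ payoff ρ a σ m)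

/-- Socrates Effect. The naive mechanism has a unique non-trivial
equilibrium, and in it the agent's strategy is the inverted separating one:
`σ_A(h | θ_l) = 1` and `σ_A(l | θ_h) = 1`. -/
theorem socrates_effect (ρ : ℝ) (hρ : ρ ∈ Set.Ioo (0:ℝ) 1)
    (a : ℝ → ℝ) (ha_mono : StrictMonoOn a (Set.Icc 0 1))
    (ha0 : a 0 = 0) (ha1 : a 1 = 1)
    (ha_mem : ∀ μ ∈ Set.Icc (0:ℝ) 1, a μ ∈ Set.Icc (0:ℝ) 1) :
    (∃ σ, IsNTEqm ρ a σ) ∧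
      ∀ σ, IsNTEqm ρ a σ → σ true false = 1 ∧ σ false true = 1 := by
  obtain ⟨hρ0, hρ1⟩ := hρ
  constructor
  · -- existence: inverted separating strategy
    refine ⟨fun θ m => if θ = m then 0 else 1, ?_, ?_, ?_, ?_⟩
    · intro θ m; dsimp only; split <;> norm_num
    · intro θ; cases θ <;> simp
    · intro m; cases m <;> simp [pmsg] <;> linarith
    · have key : ∀ m : Bool,
          payoff ρ a (fun θ m => if θ = m then (0:ℝ) else 1) m = 1/2 := by
        intro m
        cases m
        · have h1 : pmsg ρ (fun θ m => if θ = m then (0:ℝ) else 1) false = ρ := by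
            simp [pmsg]
          simp [payoff, committed, post, h1, hρ0, div_self (ne_of_gt hρ0), ha1]
        · have h1 : pmsg ρ (fun θ m => if θ = m then (0:ℝ) else 1) true = 1 - ρ := by
            simp [pmsg]
          have h2 : (0:ℝ) < 1 - ρ := by linarith
          simp [payoff, committed, post, h1, h2, ha0]
      intro θ m hpos m'
      rw [key m', key m]
  · intro σ hσ
    obtain ⟨hnn, hsum, hlt, hopt⟩ := hσ
    have hmsum : pmsg ρ σ true + pmsg ρ σ false = 1 := by
      have h1 := hsum true; have h2 := hsum false
      simp only [pmsg]; nlinarith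
    have hpt : 0 < pmsg ρ σ true := by have := hlt false; linarith
    have hpf : 0 < pmsg ρ σ false := by have := hlt true; linarith
    -- someone plays message false with positive probability
    have hplay : (0 < σ true false) ∨ (0 < σ false false) := by
      by_contra h
      push_neg at h
      have e1 : σ true false = 0 := le_antisymm h.1 (hnn true false)
      have e2 : σ false false = 0 := le_antisymm h.2 (hnn false false)
      have : pmsg ρ σ false = 0 := by simp [pmsg, e1, e2]
      linarith
    have hUle : payoff ρ a σ true ≤ payoff ρ a σ false := by
      rcases hplay with h | h
      · exact hopt true false h true
      · exact hopt false false h true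
    -- posteriors in [0,1]
    have hpostmem : ∀ m, post ρ σ m ∈ Set.Icc (0:ℝ) 1 := by
      intro m
      have hp : 0 < pmsg ρ σ m := by cases m; exact hpf; exact hpt
      constructor
      · apply div_nonneg _ (le_of_lt hp)
        exact mul_nonneg (le_of_lt hρ0) (hnn true m)
      · rw [post, div_le_one hp]
        have : 0 ≤ (1 - ρ) * σ false m :=
          mul_nonneg (by linarith) (hnn false m)
        simp only [pmsg]; linarith
    have hat := ha_mem _ (hpostmem true)
    have haf := ha_mem _ (hpostmem false)
    have hUt : payoff ρ a σ true = 1/2 + 1/2 * a (post ρ σ true) := by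
      simp only [payoff, committed, if_pos hpt, if_pos trivial]
      norm_num
    have hUf : payoff ρ a σ false = 1/2 * a (post ρ σ false) := by
      simp only [payoff, committed, if_pos hpf]
      norm_num
    rw [hUt, hUf] at hUle
    have haf1 : a (post ρ σ false) = 1 := by
      obtain ⟨_, h2⟩ := haf; obtain ⟨h3, _⟩ := hat; linarith
    have hat0 : a (post ρ σ true) = 0 := by
      obtain ⟨h3, _⟩ := hat; obtain ⟨_, h2⟩ := haf; linarith
    have hinj := ha_mono.injOn
    have hone : (1:ℝ) ∈ Set.Icc (0:ℝ) 1 := by norm_num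
    have hzero : (0:ℝ) ∈ Set.Icc (0:ℝ) 1 := by norm_num
    have hpf1 : post ρ σ false = 1 := hinj (hpostmem false) hone (by rw [haf1, ha1])
    have hpt0 : post ρ σ true = 0 := hinj (hpostmem true) hzero (by rw [hat0, ha0])
    constructor
    · -- σ true true = 0 from post true = 0
      have : ρ * σ true true = 0 := by
        have := hpt0
        simp only [post] at this
        exact (div_eq_zero_iff.mp this).resolve_right (ne_of_gt hpt)
      have h0 : σ true true = 0 := by
        rcases mul_eq_zero.mp this with h | h
        · exact absurd h (ne_of_gt hρ0)
        · exact h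
      have := hsum true; linarith
    · -- σ false false = 0 from post false = 1
      have heq : ρ * σ true false = pmsg ρ σ false := by
        have := hpf1
        rw [post, div_eq_one_iff_eq (ne_of_gt hpf)] at this
        exact this
      have : (1 - ρ) * σ false false = 0 := by
        simp only [pmsg] at heq; linarith
      have h0 : σ false false = 0 := by
        rcases mul_eq_zero.mp this with h | h
        · linarith
        · exact h
      have := hsum false; linarith

end Socrates
end
end

section
/- Equilibrium preservation: let Q = (π, χ) with χ < 1, let (σ, σ_P) be an equilibrium of Q, and let σ' be a messaging strategy whose on-path messages form a subset of the on-path messages of σ and which admits a principal best response σ_P' satisfying E_{σ_P'(m)}[u_A] = E_{σ_P(m)}[u_A] for every message m in the support of σ'. Then σ' ∈ Σ(Q), i.e., σ' is part of some equilibrium of Q (with pessimistic off-path beliefs giving the agent uncommitted payoff 0 at messages off-path for σ'). -/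
open MeasureTheory Set Filter

noncomputable section

namespace CheapTalk

variable {Θ M : Type*} [Fintype Θ] [Fintype M]

/-- Equilibrium preservation. If `(σ, σ_P)` is an equilibrium of a
partial-commitment mechanism `Q` and `σ'` is a (non-pooling) messaging strategy
whose on-path messages are a subset of those of `σ` and which admits a principal
best response delivering the agent the same payoffs as `σ_P` at every on-path
message of `σ'`, then `σ' ∈ Σ(Q)`. -/
theorem equilibrium_preservation
    {Θ M : Type*} [Fintype Θ] [Fintype M] (E : Env Θ)
    (hn : 2 ≤ Fintype.card Θ) (hM : Fintype.card Θ ≤ Fintype.card M)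
    (Q : Mech M) (hχ : Q.χ < 1) (e : Eqm E Q)
    (σ' : Θ → M → ℝ) (hstrat : IsStrategy σ')
    (hnpp : ∀ m, msgProb E σ' m < 1)
    (hsub : ∀ m, OnPath E σ' m → OnPath E e.σA m)
    (σP' : M → Measure ℝ) (hbr : IsBR E σ' σP')
    (hsame : ∀ m, OnPath E σ' m → uAOf E σP' m = uAOf E e.σP m) :
    Feasible E Q σ' := by
  -- agent payoff from the old principal strategy is nonnegative at every message
  have hnonneg : ∀ m : M, 0 ≤ uAOf E e.σP m := by
    intro m
    by_cases hop : OnPath E e.σA m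
    · -- e.σP m is a probability measure supported on Icc 0 1, and uA ≥ 0 there
      have hprob := (e.br.1 m).1
      have hIcc := (e.br.1 m).2
      have hae : ∀ᵐ a ∂(e.σP m), a ∈ Icc (0:ℝ) 1 := by
        rw [MeasureTheory.ae_iff]
        exact (MeasureTheory.prob_compl_eq_zero_iff (μ := e.σP m)
          (s := Icc (0:ℝ) 1) measurableSet_Icc).mpr hIcc
      refine MeasureTheory.integral_nonneg_of_ae ?_
      filter_upwards [hae] with a ha
      exact (E.uA_mem a ha).1
    · rw [(e.br.2.2 m hop)]
  -- every message is weakly worse than on-path messages of e under e.σP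
  have key : ∀ m' m : M, OnPath E e.σA m → UA E Q e.σP m' ≤ UA E Q e.σP m := by
    intro m' m hop
    obtain ⟨θ₀, hθ₀⟩ : ∃ θ₀, 0 < e.σA θ₀ m := by
      by_contra h
      push_neg at h
      have : msgProb E e.σA m = 0 := by
        unfold msgProb
        refine Finset.sum_eq_zero fun θ _ => ?_
        have h1 := h θ
        have h2 := e.strat.1 θ m
        have : e.σA θ m = 0 := le_antisymm h1 h2
        simp [this]
      exact absurd this (ne_of_gt hop)
    exact e.ao θ₀ m hθ₀ m'
  -- UA under σP' at off-path messages of σ' is at most UA under e.σP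
  have hUAle : ∀ m : M, UA E Q σP' m ≤ UA E Q e.σP m := by
    intro m
    by_cases hop : OnPath E σ' m
    · rw [UA, UA, hsame m hop]
    · have h0 : uAOf E σP' m = 0 := hbr.2.2 m hop
      rw [UA, UA, h0]
      have h1 : (0:ℝ) ≤ 1 - Q.χ := by linarith [Q.χ_le_one]
      nlinarith [hnonneg m]
  refine ⟨⟨σ', σP', hstrat, hbr, ?_, hnpp⟩, rfl⟩
  intro θ m hpos m'
  -- m is on-path for σ'
  have hop' : OnPath E σ' m := by
    unfold OnPath msgProb
    have hterm : 0 < E.ρ θ * σ' θ m := mul_pos (E.ρ_pos θ) hpos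
    refine Finset.sum_pos' (fun θ' _ => ?_) ⟨θ, Finset.mem_univ θ, hterm⟩
    exact mul_nonneg (E.ρ_pos θ').le (hstrat.1 θ' m)
  have hope : OnPath E e.σA m := hsub m hop'
  calc UA E Q σP' m' ≤ UA E Q e.σP m' := hUAle m'
    _ ≤ UA E Q e.σP m := key m' m hope
    _ = UA E Q σP' m := by rw [UA, UA, hsame m hop']

end CheapTalk
end
end

section
/- Intermediate value property of best-response payoffs: for any beliefs μ₁, μ₂ ∈ Δ(Θ) and any u₁ ∈ u(μ₁), u₂ ∈ u(μ₂), the following holds: for every ũ between u₁ and u₂ and every continuous path μ : [0,1] → Δ(Θ) with μ(0) = μ₁ and μ(1) = μ₂, there exists t̃ ∈ [0,1] such that ũ ∈ u(μ(t̃)). -/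
open MeasureTheory Set Filter

noncomputable section

namespace CheapTalk

variable {Θ M : Type*} [Fintype Θ] [Fintype M]

section IVTAux

variable {Θ : Type*} [Fintype Θ]

lemma pUtil_continuous (E : Env Θ) (μ : Θ → ℝ) : Continuous (pUtil E μ) := by
  unfold pUtil
  exact continuous_finset_sum _ fun θ _ => continuous_const.mul (E.uP_cont θ)

lemma BRset_subset_Icc (E : Env Θ) (μ : Θ → ℝ) : BRset E μ ⊆ Icc 0 1 := fun a ha => ha.1

lemma BRset_nonempty (E : Env Θ) (μ : Θ → ℝ) : (BRset E μ).Nonempty := by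
  obtain ⟨a, ha, hmax⟩ := isCompact_Icc.exists_isMaxOn (nonempty_Icc.2 zero_le_one)
    ((pUtil_continuous E μ).continuousOn)
  exact ⟨a, ha, fun b hb => hmax hb⟩

lemma BRset_isClosed (E : Env Θ) (μ : Θ → ℝ) : IsClosed (BRset E μ) := by
  have h : BRset E μ = Icc 0 1 ∩ ⋂ b ∈ Icc (0:ℝ) 1, {a | pUtil E μ b ≤ pUtil E μ a} := by
    ext a
    simp only [BRset, mem_inter_iff, mem_iInter, mem_setOf_eq]
  rw [h]
  exact isClosed_Icc.inter (isClosed_biInter fun b _ =>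
    isClosed_le continuous_const (pUtil_continuous E μ))

lemma BRset_isCompact (E : Env Θ) (μ : Θ → ℝ) : IsCompact (BRset E μ) :=
  isCompact_Icc.of_isClosed_subset (BRset_isClosed E μ) (BRset_subset_Icc E μ)

lemma integrable_dirac' {f : ℝ → ℝ} (a : ℝ) : Integrable f (Measure.dirac a) := by
  have h : f =ᵐ[Measure.dirac a] fun _ => f a := by
    rw [MeasureTheory.ae_dirac_eq]
    exact Filter.eventually_pure.2 rfl
  exact (integrable_const (f a)).congr h.symm

lemma uSet_subset_Icc (E : Env Θ) (μ : Θ → ℝ) :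
    uSet E μ ⊆ Icc (sInf (E.uA '' BRset E μ)) (sSup (E.uA '' BRset E μ)) := by
  rintro u ⟨ν, hν, hν1, rfl⟩
  haveI := hν
  set K := E.uA '' BRset E μ with hK
  have hKc : IsCompact K := (BRset_isCompact E μ).image E.uA_cont
  have hKne : K.Nonempty := (BRset_nonempty E μ).image _
  set g : ℝ → ℝ := fun x => E.uA (min 1 (max 0 x)) with hg
  have hgc : Continuous g :=
    E.uA_cont.comp (continuous_const.min (continuous_const.max continuous_id))
  have hmeas : MeasurableSet (BRset E μ) := (BRset_isClosed E μ).measurableSet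
  have hnull : ν (BRset E μ)ᶜ = 0 := by
    rw [measure_compl hmeas (measure_ne_top ν _), hν1, measure_univ, tsub_self]
  have hg_eq : ∀ x ∈ BRset E μ, g x = E.uA x := by
    intro x hx
    have h0 : (0:ℝ) ≤ x := hx.1.1
    have h1 : x ≤ 1 := hx.1.2
    simp [hg, max_eq_right h0, min_eq_right h1]
  have hae : E.uA =ᵐ[ν] g := by
    refine measure_mono_null (fun x hx => ?_) hnull
    simp only [mem_setOf_eq, mem_compl_iff] at hx ⊢
    exact fun hxBR => hx (hg_eq x hxBR).symm
  have hgint : Integrable g ν := by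
    obtain ⟨C, hC⟩ := isCompact_Icc.exists_bound_of_continuousOn
      (f := E.uA) E.uA_cont.continuousOn
    refine (integrable_const C).mono' hgc.aestronglyMeasurable (ae_of_all _ fun x => ?_)
    refine hC _ ⟨le_min zero_le_one (le_max_left 0 x), min_le_left 1 _⟩
  have hub : ∀ᵐ x ∂ν, g x ≤ sSup K := by
    refine measure_mono_null (fun x hx => ?_) hnull
    simp only [mem_setOf_eq, mem_compl_iff] at hx ⊢
    intro hxBR
    exact hx (by rw [hg_eq x hxBR]; exact le_csSup hKc.bddAbove (mem_image_of_mem _ hxBR))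
  have hlb : ∀ᵐ x ∂ν, sInf K ≤ g x := by
    refine measure_mono_null (fun x hx => ?_) hnull
    simp only [mem_setOf_eq, mem_compl_iff] at hx ⊢
    intro hxBR
    exact hx (by rw [hg_eq x hxBR]; exact csInf_le hKc.bddBelow (mem_image_of_mem _ hxBR))
  rw [integral_congr_ae hae]
  constructor
  · have h := integral_mono_ae (integrable_const (sInf K)) hgint hlb
    simpa using h
  · have h := integral_mono_ae hgint (integrable_const (sSup K)) hub
    simpa using h

lemma Icc_subset_uSet (E : Env Θ) (μ : Θ → ℝ) :
    Icc (sInf (E.uA '' BRset E μ)) (sSup (E.uA '' BRset E μ)) ⊆ uSet E μ := by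
  intro u hu
  set K := E.uA '' BRset E μ with hK
  have hKc : IsCompact K := (BRset_isCompact E μ).image E.uA_cont
  have hKne : K.Nonempty := (BRset_nonempty E μ).image _
  obtain ⟨a, haBR, haeq⟩ := hKc.sInf_mem hKne
  obtain ⟨b, hbBR, hbeq⟩ := hKc.sSup_mem hKne
  have hle : sInf K ≤ sSup K := csInf_le_csSup hKne hKc.bddBelow hKc.bddAbove
  obtain ⟨p, q, hp, hq, hpq, hval⟩ := (Convex.mem_Icc hle).1 hu
  have hmeas : MeasurableSet (BRset E μ) := (BRset_isClosed E μ).measurableSet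
  refine ⟨ENNReal.ofReal p • Measure.dirac a + ENNReal.ofReal q • Measure.dirac b, ?_, ?_, ?_⟩
  · constructor
    simp only [Measure.add_apply, Measure.smul_apply, smul_eq_mul, measure_univ, mul_one]
    rw [← ENNReal.ofReal_add hp hq, hpq, ENNReal.ofReal_one]
  · simp only [Measure.add_apply, Measure.smul_apply, smul_eq_mul,
      Measure.dirac_apply' _ hmeas, indicator_of_mem haBR, indicator_of_mem hbBR,
      Pi.one_apply, mul_one]
    rw [← ENNReal.ofReal_add hp hq, hpq, ENNReal.ofReal_one]
  · have hia : Integrable E.uA (ENNReal.ofReal p • Measure.dirac a) :=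
      (integrable_dirac' a).smul_measure ENNReal.ofReal_ne_top
    have hib : Integrable E.uA (ENNReal.ofReal q • Measure.dirac b) :=
      (integrable_dirac' b).smul_measure ENNReal.ofReal_ne_top
    rw [integral_add_measure hia hib, integral_smul_measure, integral_smul_measure,
      integral_dirac, integral_dirac, ENNReal.toReal_ofReal hp, ENNReal.toReal_ofReal hq,
      smul_eq_mul, smul_eq_mul, haeq, hbeq, hval]

lemma mem_BRset_of_tendsto (E : Env Θ) {μ : ℕ → Θ → ℝ} {μl : Θ → ℝ} {a : ℕ → ℝ} {al : ℝ}
    (hμ : ∀ θ, Tendsto (fun n => μ n θ) atTop (nhds (μl θ)))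
    (ha : Tendsto a atTop (nhds al)) (hBR : ∀ n, a n ∈ BRset E (μ n)) :
    al ∈ BRset E μl := by
  have hal : al ∈ Icc (0:ℝ) 1 :=
    isClosed_Icc.mem_of_tendsto ha (Eventually.of_forall fun n => (hBR n).1)
  refine ⟨hal, fun b hb => ?_⟩
  have h1 : Tendsto (fun n => pUtil E (μ n) b) atTop (nhds (pUtil E μl b)) := by
    unfold pUtil
    exact tendsto_finset_sum _ fun θ _ => (hμ θ).mul tendsto_const_nhds
  have h2 : Tendsto (fun n => pUtil E (μ n) (a n)) atTop (nhds (pUtil E μl al)) := by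
    unfold pUtil
    exact tendsto_finset_sum _ fun θ _ => (hμ θ).mul (((E.uP_cont θ).tendsto al).comp ha)
  exact le_of_tendsto_of_tendsto' h1 h2 fun n => (hBR n).2 b hb

end IVTAux

/-- Intermediate value property of best-response payoffs: along
any continuous path of beliefs from `μ₁` to `μ₂`, every payoff between
`u₁ ∈ u(μ₁)` and `u₂ ∈ u(μ₂)` is attained by a best response at some belief on
the path. -/
theorem intermediate_value_best_response
    {Θ : Type*} [Fintype Θ] (E : Env Θ)
    (μ₁ μ₂ : Θ → ℝ) (h₁ : μ₁ ∈ stdSimplex ℝ Θ) (h₂ : μ₂ ∈ stdSimplex ℝ Θ)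
    (u₁ u₂ : ℝ) (hu₁ : u₁ ∈ uSet E μ₁) (hu₂ : u₂ ∈ uSet E μ₂)
    (u : ℝ) (hu : u ∈ uIcc u₁ u₂)
    (path : ℝ → Θ → ℝ) (hcont : ContinuousOn path (Icc 0 1))
    (hmem : ∀ t ∈ Icc (0:ℝ) 1, path t ∈ stdSimplex ℝ Θ)
    (hp0 : path 0 = μ₁) (hp1 : path 1 = μ₂) :
    ∃ t ∈ Icc (0:ℝ) 1, u ∈ uSet E (path t) := by
  classical
  set lo : ℝ → ℝ := fun t => sInf (E.uA '' BRset E (path t)) with hlo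
  set hi : ℝ → ℝ := fun t => sSup (E.uA '' BRset E (path t)) with hhi
  have hKc : ∀ t : ℝ, IsCompact (E.uA '' BRset E (path t)) :=
    fun t => (BRset_isCompact E _).image E.uA_cont
  have hKne : ∀ t : ℝ, (E.uA '' BRset E (path t)).Nonempty :=
    fun t => (BRset_nonempty E _).image _
  have hseq : ∀ (x : ℕ → ℝ) (t : ℝ), (∀ n, x n ∈ Icc (0:ℝ) 1) →
      Tendsto x atTop (nhds t) → t ∈ Icc (0:ℝ) 1 →
      ∀ sel : ℕ → ℝ, (∀ n, sel n ∈ BRset E (path (x n))) →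
      ∃ al ∈ BRset E (path t), ∃ φ : ℕ → ℕ, StrictMono φ ∧
        Tendsto (fun k => E.uA (sel (φ k))) atTop (nhds (E.uA al)) := by
    intro x t hxI hxt htI sel hsel
    obtain ⟨al, _halI, φ, hφ, hconv⟩ :=
      isCompact_Icc.tendsto_subseq (fun n => BRset_subset_Icc E _ (hsel n))
    have hxφ : Tendsto (fun k => x (φ k)) atTop (nhds t) := hxt.comp hφ.tendsto_atTop
    have hpathT : Tendsto (fun k => path (x (φ k))) atTop (nhds (path t)) := by
      exact Filter.Tendsto.comp (hcont t htI).tendsto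
        (tendsto_nhdsWithin_iff.2 ⟨hxφ, Eventually.of_forall fun k => hxI (φ k)⟩)
    have hμ : ∀ θ, Tendsto (fun k => path (x (φ k)) θ) atTop (nhds (path t θ)) :=
      fun θ => ((continuous_apply θ).tendsto (path t)).comp hpathT
    have halBR : al ∈ BRset E (path t) :=
      mem_BRset_of_tendsto E hμ hconv (fun k => hsel (φ k))
    exact ⟨al, halBR, φ, hφ, (E.uA_cont.tendsto al).comp hconv⟩
  set A : Set ℝ := {t | t ∈ Icc (0:ℝ) 1 ∧ lo t ≤ u} with hA
  set B : Set ℝ := {t | t ∈ Icc (0:ℝ) 1 ∧ u ≤ hi t} with hB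
  have hAclosed : IsClosed A := by
    refine IsSeqClosed.isClosed ?_
    intro x t hx hxt
    have htI : t ∈ Icc (0:ℝ) 1 :=
      isClosed_Icc.mem_of_tendsto hxt (Eventually.of_forall fun n => (hx n).1)
    refine ⟨htI, ?_⟩
    have hexists : ∀ n, ∃ c, c ∈ BRset E (path (x n)) ∧ E.uA c = lo (x n) := by
      intro n
      obtain ⟨c, hc, hceq⟩ := (hKc (x n)).sInf_mem (hKne (x n))
      exact ⟨c, hc, hceq⟩
    choose sel hselBR hseleq using hexists
    obtain ⟨al, halBR, φ, hφ, hconv⟩ := hseq x t (fun n => (hx n).1) hxt htI sel hselBR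
    have h1 : lo t ≤ E.uA al := csInf_le (hKc t).bddBelow (mem_image_of_mem _ halBR)
    have h2 : E.uA al ≤ u := by
      refine le_of_tendsto hconv (Eventually.of_forall fun k => ?_)
      rw [hseleq]
      exact (hx (φ k)).2
    exact h1.trans h2
  have hBclosed : IsClosed B := by
    refine IsSeqClosed.isClosed ?_
    intro x t hx hxt
    have htI : t ∈ Icc (0:ℝ) 1 :=
      isClosed_Icc.mem_of_tendsto hxt (Eventually.of_forall fun n => (hx n).1)
    refine ⟨htI, ?_⟩
    have hexists : ∀ n, ∃ c, c ∈ BRset E (path (x n)) ∧ E.uA c = hi (x n) := by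
      intro n
      obtain ⟨c, hc, hceq⟩ := (hKc (x n)).sSup_mem (hKne (x n))
      exact ⟨c, hc, hceq⟩
    choose sel hselBR hseleq using hexists
    obtain ⟨al, halBR, φ, hφ, hconv⟩ := hseq x t (fun n => (hx n).1) hxt htI sel hselBR
    have h1 : E.uA al ≤ hi t := le_csSup (hKc t).bddAbove (mem_image_of_mem _ halBR)
    have h2 : u ≤ E.uA al := by
      refine ge_of_tendsto hconv (Eventually.of_forall fun k => ?_)
      rw [hseleq]
      exact (hx (φ k)).2
    exact h2.trans h1
  have hcover : Icc (0:ℝ) 1 ⊆ A ∪ B := by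
    intro t ht
    rcases le_or_gt (lo t) u with h | h
    · exact Or.inl ⟨ht, h⟩
    · exact Or.inr ⟨ht,
        h.le.trans (csInf_le_csSup (hKne t) (hKc t).bddBelow (hKc t).bddAbove)⟩
  have h₁' : u₁ ∈ Icc (lo 0) (hi 0) :=
    uSet_subset_Icc E (path 0) (by rw [hp0]; exact hu₁)
  have h₂' : u₂ ∈ Icc (lo 1) (hi 1) :=
    uSet_subset_Icc E (path 1) (by rw [hp1]; exact hu₂)
  have h01 : (0:ℝ) ∈ Icc (0:ℝ) 1 := ⟨le_refl 0, zero_le_one⟩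
  have h11 : (1:ℝ) ∈ Icc (0:ℝ) 1 := ⟨zero_le_one, le_refl 1⟩
  have hane : (Icc (0:ℝ) 1 ∩ A).Nonempty := by
    rcases Set.mem_uIcc.1 hu with ⟨ha, _⟩ | ⟨ha, _⟩
    · exact ⟨0, h01, h01, h₁'.1.trans ha⟩
    · exact ⟨1, h11, h11, h₂'.1.trans ha⟩
  have hbne : (Icc (0:ℝ) 1 ∩ B).Nonempty := by
    rcases Set.mem_uIcc.1 hu with ⟨_, hb⟩ | ⟨_, hb⟩
    · exact ⟨1, h11, h11, hb.trans h₂'.2⟩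
    · exact ⟨0, h01, h01, hb.trans h₁'.2⟩
  obtain ⟨t, htI, htA, htB⟩ :=
    isPreconnected_closed_iff.1 isPreconnected_Icc A B hAclosed hBclosed hcover hane hbne
  exact ⟨t, htI, Icc_subset_uSet E (path t) ⟨htA.2, htB.2⟩⟩

end CheapTalk
end
end
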